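/- arXiv:hep-th/9910253 — 2 statements merged into one kernel-verified Lean document; each statement's English description precedes it below -/
import Mathlib

section
/- For a regular R-matrix, the super trace of the inhomogeneous monodromy matrix evaluated at ξ_n equals the product of fermionic R-operators implementing the cyclic shift: str(T_{1…L}(ξ_n)) = R^f_{n,n-1} ⋯ R^f_{n,1} R^f_{n,L} ⋯ R^f_{n,n+1}, where R^f_{jk} = R^f_{jk}(ξ_j, ξ_k). -/
open Matrix BigOperators

abbrev Conf (L N : ℕ) := Fin L → Fin N

noncomputable def E {L N : ℕ} (p : Fin N → ℕ) (j : Fin L) (α β : Fin N) :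
    Matrix (Conf L N) (Conf L N) ℂ := Matrix.of fun x y =>
  if x j = α ∧ y j = β ∧ ∀ k, k ≠ j → x k = y k then
    (-1 : ℂ) ^ ((p α + p β) * ∑ k ∈ Finset.univ.filter (fun k => j < k), p (x k))
  else 0

noncomputable def P {L N : ℕ} (p : Fin N → ℕ) (j k : Fin L) :
    Matrix (Conf L N) (Conf L N) ℂ :=
  ∑ α, ∑ β, ((-1 : ℂ) ^ p β) • (E p j α β * E p k β α)

noncomputable def Rf {L N : ℕ} (p : Fin N → ℕ)
    (R : Fin N → Fin N → Fin N → Fin N → ℂ) (j k : Fin L) :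
    Matrix (Conf L N) (Conf L N) ℂ :=
  ∑ α, ∑ β, ∑ γ, ∑ δ,
    ((-1 : ℂ) ^ (p γ + p α * (p β + p γ)) * R α β γ δ) • (E p j α γ * E p k β δ)

noncomputable def Lmat {L N : ℕ} (p : Fin N → ℕ)
    (Rm : ℂ → ℂ → Fin N → Fin N → Fin N → Fin N → ℂ) (j : Fin L) (u v : ℂ) :
    Matrix (Fin N) (Fin N) (Matrix (Conf L N) (Conf L N) ℂ) :=
  Matrix.of fun α β => ∑ γ, ∑ δ, ((-1 : ℂ) ^ (p α * p γ) * Rm u v α γ β δ) • E p j γ δ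

noncomputable def Tm {L N : ℕ} (p : Fin N → ℕ)
    (Rm : ℂ → ℂ → Fin N → Fin N → Fin N → Fin N → ℂ) (ξ : Fin L → ℂ) (u : ℂ) :
    Matrix (Fin N) (Fin N) (Matrix (Conf L N) (Conf L N) ℂ) :=
  ((List.finRange L).map (fun j => Lmat p Rm j u (ξ j))).reverse.prod

noncomputable def str {N : ℕ} {M : Type*} [AddCommMonoid M] [Module ℂ M]
    (p : Fin N → ℕ) (A : Matrix (Fin N) (Fin N) M) : M :=
  ∑ α, ((-1 : ℂ) ^ p α) • A α α

lemma npz {a b : ℕ} (h : (a : ZMod 2) = (b : ZMod 2)) : (-1 : ℂ)^a = (-1 : ℂ)^b := by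
  have h2 : a % 2 = b % 2 := by
    have := (ZMod.natCast_eq_natCast_iff a b 2).mp h
    simpa [Nat.ModEq] using this
  rw [← Nat.div_add_mod a 2, ← Nat.div_add_mod b 2, pow_add, pow_add, pow_mul, pow_mul]
  simp [h2]
lemma E_apply {L N : ℕ} (p : Fin N → ℕ) (j : Fin L) (a b : Fin N) (x y : Conf L N) :
    E p j a b x y = if x j = a ∧ y = Function.update x j b then
      (-1 : ℂ) ^ ((p a + p b) * ∑ k ∈ Finset.univ.filter (fun k => j < k), p (x k))
    else 0 := by
  unfold E
  rw [Matrix.of_apply]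
  congr 1
  simp only [eq_iff_iff]
  constructor
  · rintro ⟨h1, h2, h3⟩
    refine ⟨h1, funext fun k => ?_⟩
    by_cases hk : k = j
    · subst hk; simp [Function.update_self, h2]
    · rw [Function.update_of_ne hk]; exact (h3 k hk).symm
  · rintro ⟨h1, h2⟩
    subst h2
    exact ⟨h1, Function.update_self j b x, fun k hk => (Function.update_of_ne hk b x).symm⟩

lemma sum_p_update_not_mem {L N : ℕ} (p : Fin N → ℕ) (s : Finset (Fin L)) (x : Conf L N)
    {i : Fin L} (v : Fin N) (hi : i ∉ s) :
    ∑ m ∈ s, p (Function.update x i v m) = ∑ m ∈ s, p (x m) :=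
  Finset.sum_congr rfl fun m hm => by
    rw [Function.update_of_ne (by rintro rfl; exact hi hm)]

lemma sum_p_update_mem {L N : ℕ} (p : Fin N → ℕ) (s : Finset (Fin L)) (x : Conf L N)
    {i : Fin L} (v : Fin N) (hi : i ∈ s) :
    ∑ m ∈ s, p (Function.update x i v m) = p v + ∑ m ∈ s.erase i, p (x m) := by
  rw [← Finset.add_sum_erase _ _ hi]
  congr 1
  · simp
  · exact Finset.sum_congr rfl fun m hm => by
      rw [Function.update_of_ne (Finset.ne_of_mem_erase hm)]

lemma sum_p_split {L N : ℕ} (p : Fin N → ℕ) (s : Finset (Fin L)) (x : Conf L N)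
    {i : Fin L} (hi : i ∈ s) :
    ∑ m ∈ s, p (x m) = p (x i) + ∑ m ∈ s.erase i, p (x m) :=
  (Finset.add_sum_erase _ _ hi).symm

lemma E_mul_E_apply {L N : ℕ} (p : Fin N → ℕ) (j k : Fin L) (a b c d : Fin N)
    (x y : Conf L N) :
    (E p j a b * E p k c d) x y =
      if x j = a ∧ (Function.update x j b) k = c ∧
          y = Function.update (Function.update x j b) k d then
        (-1 : ℂ) ^ ((p a + p b) * ∑ m ∈ Finset.univ.filter (fun m => j < m), p (x m)) *
        (-1 : ℂ) ^ ((p c + p d) * ∑ m ∈ Finset.univ.filter (fun m => k < m),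
          p (Function.update x j b m))
      else 0 := by
  rw [Matrix.mul_apply]
  rw [Finset.sum_eq_single (Function.update x j b)]
  · rw [E_apply, E_apply]
    by_cases h1 : x j = a
    · by_cases h2 : (Function.update x j b) k = c
      · by_cases h3 : y = Function.update (Function.update x j b) k d
        · simp [h1, h2, h3]
        · simp [h1, h2, h3]
      · simp [h1, h2]
    · simp [h1]
  · intro z _ hz
    rw [E_apply]
    simp [hz]
  · intro h; simp at h

lemma E_mul_E_same {L N : ℕ} (p : Fin N → ℕ) (j : Fin L) (a b c d : Fin N) :
    E p j a b * E p j c d = if b = c then E p j a d else 0 := by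
  ext x y
  rw [E_mul_E_apply]
  have hupd : Function.update (Function.update x j b) j d = Function.update x j d :=
    Function.update_idem ..
  have hsum : ∑ m ∈ Finset.univ.filter (fun m => j < m), p (Function.update x j b m)
      = ∑ m ∈ Finset.univ.filter (fun m => j < m), p (x m) := by
    apply sum_p_update_not_mem
    simp
  by_cases hbc : b = c
  · subst hbc
    rw [if_pos rfl, E_apply]
    simp only [Function.update_self, hupd, hsum]
    by_cases h1 : x j = a
    · by_cases h3 : y = Function.update x j d
      · rw [if_pos ⟨h1, trivial, h3⟩, if_pos ⟨h1, h3⟩, ← pow_add]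
        apply npz
        push_cast
        generalize (p a : ZMod 2) = A
        generalize (p b : ZMod 2) = B
        generalize (p d : ZMod 2) = D
        generalize (∑ m ∈ Finset.univ.filter (fun m => j < m), (p (x m) : ZMod 2)) = S
        revert A B D S; decide
      · rw [if_neg (by tauto), if_neg (by tauto)]
    · rw [if_neg (by tauto), if_neg (by tauto)]
  · rw [if_neg hbc]
    simp only [Function.update_self]
    rw [if_neg (by tauto)]
    simp

lemma E_comm {L N : ℕ} (p : Fin N → ℕ) {j k : Fin L} (h : j ≠ k) (a b c d : Fin N) :
    E p j a b * E p k c d =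
      (-1 : ℂ)^((p a + p b) * (p c + p d)) • (E p k c d * E p j a b) := by
  ext x y
  rw [E_mul_E_apply, Matrix.smul_apply, E_mul_E_apply, smul_eq_mul]
  rw [Function.update_of_ne (Ne.symm h), Function.update_of_ne h]
  by_cases h1 : x j = a
  · by_cases h2 : x k = c
    · by_cases h3 : y = Function.update (Function.update x j b) k d
      · rw [if_pos ⟨h1, h2, h3⟩,
          if_pos ⟨h2, h1, by rw [h3, Function.update_comm h]⟩]
        rcases h.lt_or_gt with hlt | hlt
        · -- j < k
          have e1 : ∑ m ∈ Finset.univ.filter (fun m => k < m), p (Function.update x j b m)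
              = ∑ m ∈ Finset.univ.filter (fun m => k < m), p (x m) :=
            sum_p_update_not_mem p _ x b (by simp [Finset.mem_filter]; exact le_of_lt hlt)
          have e2 : ∑ m ∈ Finset.univ.filter (fun m => j < m), p (Function.update x k d m)
              = p d + ∑ m ∈ (Finset.univ.filter (fun m => j < m)).erase k, p (x m) :=
            sum_p_update_mem p _ x d (by simp [Finset.mem_filter]; exact hlt)
          have e3 : ∑ m ∈ Finset.univ.filter (fun m => j < m), p (x m)
              = p (x k) + ∑ m ∈ (Finset.univ.filter (fun m => j < m)).erase k, p (x m) :=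
            sum_p_split p _ x (by simp [Finset.mem_filter]; exact hlt)
          rw [e1, e2, e3, h2, ← pow_add, ← pow_add, ← pow_add]
          apply npz
          push_cast
          generalize (p a : ZMod 2) = A
          generalize (p b : ZMod 2) = B
          generalize (p c : ZMod 2) = C
          generalize (p d : ZMod 2) = D
          generalize (∑ m ∈ (Finset.univ.filter (fun m => j < m)).erase k, (p (x m) : ZMod 2)) = W
          generalize (∑ m ∈ Finset.univ.filter (fun m => k < m), (p (x m) : ZMod 2)) = U
          revert A B C D W U; decide
        · -- k < j
          have e1 : ∑ m ∈ Finset.univ.filter (fun m => k < m), p (Function.update x j b m)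
              = p b + ∑ m ∈ (Finset.univ.filter (fun m => k < m)).erase j, p (x m) :=
            sum_p_update_mem p _ x b (by simp [Finset.mem_filter]; exact hlt)
          have e2 : ∑ m ∈ Finset.univ.filter (fun m => j < m), p (Function.update x k d m)
              = ∑ m ∈ Finset.univ.filter (fun m => j < m), p (x m) :=
            sum_p_update_not_mem p _ x d (by simp [Finset.mem_filter]; exact le_of_lt hlt)
          have e3 : ∑ m ∈ Finset.univ.filter (fun m => k < m), p (x m)
              = p (x j) + ∑ m ∈ (Finset.univ.filter (fun m => k < m)).erase j, p (x m) :=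
            sum_p_split p _ x (by simp [Finset.mem_filter]; exact hlt)
          rw [e1, e2, e3, h1, ← pow_add, ← pow_add, ← pow_add]
          apply npz
          push_cast
          generalize (p a : ZMod 2) = A
          generalize (p b : ZMod 2) = B
          generalize (p c : ZMod 2) = C
          generalize (p d : ZMod 2) = D
          generalize (∑ m ∈ (Finset.univ.filter (fun m => k < m)).erase j, (p (x m) : ZMod 2)) = W
          generalize (∑ m ∈ Finset.univ.filter (fun m => j < m), (p (x m) : ZMod 2)) = T
          revert A B C D W T; decide
      · rw [if_neg (by tauto),
          if_neg (fun hc => h3 (by rw [hc.2.2, Function.update_comm (Ne.symm h)])), mul_zero]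
    · rw [if_neg (by tauto), if_neg (by tauto), mul_zero]
  · rw [if_neg (by tauto), if_neg (by tauto), mul_zero]









lemma parity_swap (a b c d s : ℕ) (hp : ((a + b + c + d : ℕ) : ZMod 2) = 0) :
    (-1:ℂ)^((b + d) * s) = (-1:ℂ)^((a + c) * s) := by
  apply npz
  push_cast at hp ⊢
  revert hp
  generalize (a : ZMod 2) = A
  generalize (b : ZMod 2) = B
  generalize (c : ZMod 2) = C
  generalize (d : ZMod 2) = D
  generalize (s : ZMod 2) = S
  revert A B C D S; decide

lemma comm_flip {M : Type*} [Ring M] [Module ℂ M] {X Y : M} {e : ℕ}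
    (h : X * Y = (-1:ℂ)^e • (Y * X)) : Y * X = (-1:ℂ)^e • (X * Y) := by
  rw [h, smul_smul, ← pow_add]
  have : (-1:ℂ)^(e+e) = 1 := Even.neg_one_pow ⟨e, rfl⟩
  rw [this, one_smul]

lemma Lmat_E_comm {L N : ℕ} (p : Fin N → ℕ)
    (Rm : ℂ → ℂ → Fin N → Fin N → Fin N → Fin N → ℂ)
    (hcomp : ∀ u v α β γ δ, ((p α + p β + p γ + p δ : ℕ) : ZMod 2) ≠ 0 →
      Rm u v α β γ δ = 0)
    {j k : Fin L} (hjk : j ≠ k) (u v : ℂ) (α β c d : Fin N) :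
    Lmat p Rm j u v α β * E p k c d =
      (-1:ℂ)^((p α + p β) * (p c + p d)) • (E p k c d * Lmat p Rm j u v α β) := by
  unfold Lmat
  simp only [Matrix.of_apply, Finset.sum_mul, Finset.mul_sum, Finset.smul_sum]
  refine Finset.sum_congr rfl fun γ _ => ?_
  refine Finset.sum_congr rfl fun δ _ => ?_
  by_cases hR : Rm u v α γ β δ = 0
  · simp [hR]
  · have hp : ((p α + p γ + p β + p δ : ℕ) : ZMod 2) = 0 := by
      by_contra hne; exact hR (hcomp u v α γ β δ hne)
    rw [smul_mul_assoc, E_comm p hjk γ δ c d, mul_smul_comm, smul_smul, smul_smul]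
    rw [parity_swap (p α) (p γ) (p β) (p δ) (p c + p d) hp]
    congr 1
    ring

noncomputable def opProd {L N : ℕ} (p : Fin N → ℕ)
    (Rm : ℂ → ℂ → Fin N → Fin N → Fin N → Fin N → ℂ) (ξ : Fin L → ℂ) (u : ℂ) :
    List (Fin L) → Fin N → Fin N → Matrix (Conf L N) (Conf L N) ℂ
  | [], a, b => if a = b then 1 else 0
  | (k :: t), a, b => ∑ e, Lmat p Rm k u (ξ k) a e * opProd p Rm ξ u t e b

variable {L N : ℕ} (p : Fin N → ℕ)
    (Rm : ℂ → ℂ → Fin N → Fin N → Fin N → Fin N → ℂ) (ξ : Fin L → ℂ) (u : ℂ)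

lemma opProd_E_comm
    (hcomp : ∀ u v α β γ δ, ((p α + p β + p γ + p δ : ℕ) : ZMod 2) ≠ 0 →
      Rm u v α β γ δ = 0)
    (s : List (Fin L)) {k : Fin L} (hk : k ∉ s) (a b c d : Fin N) :
    opProd p Rm ξ u s a b * E p k c d =
      (-1:ℂ)^((p a + p b) * (p c + p d)) • (E p k c d * opProd p Rm ξ u s a b) := by
  induction s generalizing a b with
  | nil =>
      by_cases hab : a = b
      · subst hab
        simp only [opProd, if_pos rfl, one_mul, mul_one]
        rw [show ((p a + p a) * (p c + p d)) = 2 * (p a * (p c + p d)) by ring,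
          pow_mul]
        simp
      · simp [opProd, hab]
  | cons m t ih =>
      have hm : m ≠ k := fun h => hk (h ▸ (List.mem_cons_self (a := m) (l := t)))
      have hkt : k ∉ t := fun h => hk (List.mem_cons_of_mem m h)
      simp only [opProd, Finset.sum_mul, Finset.mul_sum, Finset.smul_sum]
      refine Finset.sum_congr rfl fun e _ => ?_
      rw [mul_assoc, ih hkt, mul_smul_comm, ← mul_assoc,
        Lmat_E_comm p Rm hcomp hm, smul_mul_assoc, smul_smul, mul_assoc, ← pow_add]
      rw [npz (a := (p e + p b) * (p c + p d) + (p a + p e) * (p c + p d))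
        (b := (p a + p b) * (p c + p d)) ?_]
      push_cast
      generalize (p a : ZMod 2) = A
      generalize (p b : ZMod 2) = B
      generalize (p c : ZMod 2) = C
      generalize (p d : ZMod 2) = D
      generalize (p e : ZMod 2) = Ee
      revert A B C D Ee; decide

lemma Lmat_opProd_comm
    (hcomp : ∀ u v α β γ δ, ((p α + p β + p γ + p δ : ℕ) : ZMod 2) ≠ 0 →
      Rm u v α β γ δ = 0)
    (s : List (Fin L)) {k : Fin L} (hk : k ∉ s) (v : ℂ) (a e c d : Fin N) :
    Lmat p Rm k u v a e * opProd p Rm ξ u s c d =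
      (-1:ℂ)^((p a + p e) * (p c + p d)) • (opProd p Rm ξ u s c d * Lmat p Rm k u v a e) := by
  unfold Lmat
  simp only [Matrix.of_apply, Finset.sum_mul, Finset.mul_sum, Finset.smul_sum]
  refine Finset.sum_congr rfl fun γ _ => ?_
  refine Finset.sum_congr rfl fun δ _ => ?_
  by_cases hR : Rm u v a γ e δ = 0
  · simp [hR]
  · have hp : ((p a + p γ + p e + p δ : ℕ) : ZMod 2) = 0 := by
      by_contra hne; exact hR (hcomp u v a γ e δ hne)
    rw [smul_mul_assoc, comm_flip (opProd_E_comm p Rm ξ u hcomp s hk c d γ δ),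
      mul_smul_comm, smul_smul, smul_smul]
    rw [show (p c + p d) * (p γ + p δ) = (p γ + p δ) * (p c + p d) by ring,
      parity_swap (p a) (p γ) (p e) (p δ) (p c + p d) hp]
    congr 1
    ring

lemma opProd_opProd_comm
    (hcomp : ∀ u v α β γ δ, ((p α + p β + p γ + p δ : ℕ) : ZMod 2) ≠ 0 →
      Rm u v α β γ δ = 0)
    (s t : List (Fin L)) (hdisj : ∀ m ∈ s, m ∉ t) (a b c d : Fin N) :
    opProd p Rm ξ u s a b * opProd p Rm ξ u t c d =
      (-1:ℂ)^((p a + p b) * (p c + p d)) •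
        (opProd p Rm ξ u t c d * opProd p Rm ξ u s a b) := by
  induction s generalizing a b with
  | nil =>
      by_cases hab : a = b
      · subst hab
        simp only [opProd, if_pos rfl, one_mul, mul_one]
        rw [show ((p a + p a) * (p c + p d)) = 2 * (p a * (p c + p d)) by ring, pow_mul]
        simp
      · simp [opProd, hab]
  | cons m t' ih =>
      have hm : m ∉ t := hdisj m ((List.mem_cons_self (a := m) (l := t')))
      have hd' : ∀ x ∈ t', x ∉ t := fun x hx => hdisj x (List.mem_cons_of_mem m hx)
      simp only [opProd, Finset.sum_mul, Finset.mul_sum, Finset.smul_sum]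
      refine Finset.sum_congr rfl fun e _ => ?_
      rw [mul_assoc, ih hd', mul_smul_comm, ← mul_assoc,
        Lmat_opProd_comm p Rm ξ u hcomp t hm, smul_mul_assoc, smul_smul, mul_assoc, ← pow_add]
      rw [npz (a := (p e + p b) * (p c + p d) + (p a + p e) * (p c + p d))
        (b := (p a + p b) * (p c + p d)) ?_]
      push_cast
      generalize (p a : ZMod 2) = A
      generalize (p b : ZMod 2) = B
      generalize (p c : ZMod 2) = C
      generalize (p d : ZMod 2) = D
      generalize (p e : ZMod 2) = Ee
      revert A B C D Ee; decide

lemma prod_entry (s : List (Fin L)) (a b : Fin N) :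
    ((s.map (fun k => Lmat p Rm k u (ξ k))).prod) a b = opProd p Rm ξ u s a b := by
  induction s generalizing a b with
  | nil => simp [opProd, Matrix.one_apply]
  | cons m t ih =>
      simp only [List.map_cons, List.prod_cons, Matrix.mul_apply, opProd]
      exact Finset.sum_congr rfl fun e _ => by rw [ih]

lemma opProd_append (s t : List (Fin L)) (a b : Fin N) :
    opProd p Rm ξ u (s ++ t) a b = ∑ e, opProd p Rm ξ u s a e * opProd p Rm ξ u t e b := by
  induction s generalizing a with
  | nil =>
      simp only [List.nil_append, opProd]
      rw [Finset.sum_eq_single a]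
      · simp [opProd]
      · intro e _ he; simp [opProd, Ne.symm he]
      · intro h; simp at h
  | cons m s' ih =>
      simp only [List.cons_append, opProd]
      calc ∑ e, Lmat p Rm m u (ξ m) a e * opProd p Rm ξ u (s' ++ t) e b
          = ∑ e, ∑ f, Lmat p Rm m u (ξ m) a e * (opProd p Rm ξ u s' e f * opProd p Rm ξ u t f b) := by
            simp only [ih, Finset.mul_sum]
        _ = ∑ f, (∑ e, Lmat p Rm m u (ξ m) a e * opProd p Rm ξ u s' e f) * opProd p Rm ξ u t f b := by
            rw [Finset.sum_comm]
            simp only [Finset.sum_mul, mul_assoc]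

lemma even_pow_one (m s : ℕ) : (-1:ℂ)^((m + m) * s) = 1 := by
  rw [npz (b := 0) ?_, pow_zero]
  push_cast
  generalize (m : ZMod 2) = M
  generalize (s : ZMod 2) = S
  revert M S; decide

lemma even_pow_one' (m : ℕ) : (-1:ℂ)^(m * (1 + m)) = 1 := by
  rw [npz (b := 0) ?_, pow_zero]
  push_cast
  generalize (m : ZMod 2) = M
  revert M; decide

lemma sum_E_diag (nn : Fin L) : ∑ a, E p nn a a = (1 : Matrix (Conf L N) (Conf L N) ℂ) := by
  ext x y
  rw [Matrix.sum_apply, Matrix.one_apply]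
  rw [Finset.sum_eq_single (x nn)]
  · rw [E_apply, Function.update_eq_self]
    by_cases h : y = x
    · rw [if_pos ⟨rfl, h⟩, if_pos h.symm, even_pow_one]
    · rw [if_neg (by tauto), if_neg (fun hx => h hx.symm)]
  · intro e _ he
    rw [E_apply, if_neg (by tauto)]
  · intro h; simp at h

lemma Rf_eq (v : ℂ) (nn k : Fin L) :
    Rf p (Rm u v) nn k =
      ∑ a, ∑ g, ((-1:ℂ)^(p g * (1 + p a))) • (E p nn a g * Lmat p Rm k u v a g) := by
  unfold Rf Lmat
  simp only [Matrix.of_apply, Finset.mul_sum, mul_smul_comm, Finset.smul_sum, smul_smul]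
  refine Finset.sum_congr rfl fun α _ => ?_
  rw [Finset.sum_comm]
  refine Finset.sum_congr rfl fun γ _ => ?_
  refine Finset.sum_congr rfl fun β _ => ?_
  refine Finset.sum_congr rfl fun δ _ => ?_
  congr 1
  rw [show p γ + p α * (p β + p γ) = p γ * (1 + p α) + p α * p β by ring, pow_add, mul_assoc]

lemma step_lemma (nn : Fin L) (α γ a b : Fin N) (X Y : Matrix (Conf L N) (Conf L N) ℂ) (e : ℕ)
    (hX : X * E p nn a b = (-1:ℂ)^e • (E p nn a b * X)) :
    (E p nn α γ * X) * (E p nn a b * Y) =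
      (-1:ℂ)^e • ((if γ = a then E p nn α b else 0) * (X * Y)) := by
  rw [mul_assoc, ← mul_assoc X, hX, smul_mul_assoc, mul_smul_comm, mul_assoc,
    ← mul_assoc (E p nn α γ), E_mul_E_same]

lemma sum_rot {M : Type*} [AddCommMonoid M] {ι : Type*} [Fintype ι] (f : ι → ι → ι → M) :
    (∑ x, ∑ y, ∑ z, f x y z) = ∑ z, ∑ y, ∑ x, f x y z :=
  calc (∑ x, ∑ y, ∑ z, f x y z) = ∑ y, ∑ x, ∑ z, f x y z := Finset.sum_comm
    _ = ∑ y, ∑ z, ∑ x, f x y z := Finset.sum_congr rfl fun _ _ => Finset.sum_comm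
    _ = ∑ z, ∑ y, ∑ x, f x y z := Finset.sum_comm

lemma shiftProd
    (hcomp : ∀ u v α β γ δ, ((p α + p β + p γ + p δ : ℕ) : ZMod 2) ≠ 0 →
      Rm u v α β γ δ = 0)
    (nn : Fin L) (s : List (Fin L)) (hs : nn ∉ s) :
    ((s.map (fun k => Rf p (Rm u (ξ k)) nn k)).prod) =
      ∑ a, ∑ b, ((-1:ℂ)^(p b * (1 + p a))) • (E p nn a b * opProd p Rm ξ u s a b) := by
  induction s with
  | nil =>
      simp only [List.map_nil, List.prod_nil, opProd]
      rw [show (∑ a, ∑ b, ((-1:ℂ)^(p b * (1 + p a))) •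
          (E p nn a b * if a = b then (1 : Matrix (Conf L N) (Conf L N) ℂ) else 0))
          = ∑ a, E p nn a a from ?_, sum_E_diag]
      refine Finset.sum_congr rfl fun a _ => ?_
      rw [Finset.sum_eq_single a]
      · rw [if_pos rfl, mul_one, even_pow_one', one_smul]
      · intro e _ he; simp [Ne.symm he]
      · intro h; simp at h
  | cons k t ih =>
      have hknn : k ≠ nn := fun h => hs (h ▸ (List.mem_cons_self (a := k) (l := t)))
      have hnt : nn ∉ t := fun h => hs (List.mem_cons_of_mem k h)
      rw [List.map_cons, List.prod_cons, Rf_eq, ih hnt]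
      have key : ∀ (α γ a b : Fin N),
          (E p nn α γ * Lmat p Rm k u (ξ k) α γ) * (E p nn a b * opProd p Rm ξ u t a b)
          = (-1:ℂ)^((p α + p γ) * (p a + p b)) •
            ((if γ = a then E p nn α b else 0) *
              (Lmat p Rm k u (ξ k) α γ * opProd p Rm ξ u t a b)) :=
        fun α γ a b => step_lemma p nn α γ a b _ _ _
          (Lmat_E_comm p Rm hcomp hknn u (ξ k) α γ a b)
      simp only [Finset.sum_mul, Finset.mul_sum, smul_mul_assoc, mul_smul_comm, smul_smul]
      simp only [key, smul_smul, ite_mul, zero_mul, smul_ite, smul_zero]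
      simp only [Finset.sum_ite_eq', Finset.mem_univ, if_true, Finset.smul_sum, smul_smul]
      conv_rhs => simp only [opProd, Finset.mul_sum, Finset.smul_sum]
      conv_lhs => rw [sum_rot]
      refine Finset.sum_congr rfl fun α _ => ?_
      refine Finset.sum_congr rfl fun b _ => ?_
      refine Finset.sum_congr rfl fun e _ => ?_
      congr 1
      rw [← pow_add, ← pow_add]
      apply npz
      push_cast
      generalize (p α : ZMod 2) = A
      generalize (p b : ZMod 2) = B
      generalize (p e : ZMod 2) = Ee
      revert A B Ee; decide

lemma Lmat_reg
    (hreg : ∀ v α β γ δ, Rm v v α β γ δ = if α = δ ∧ β = γ then 1 else 0)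
    (nn : Fin L) (v : ℂ) (a b : Fin N) :
    Lmat p Rm nn v v a b = ((-1:ℂ)^(p a * p b)) • E p nn b a := by
  unfold Lmat
  rw [Matrix.of_apply]
  rw [Finset.sum_eq_single b]
  · rw [Finset.sum_eq_single a]
    · rw [hreg, if_pos ⟨rfl, rfl⟩, mul_one]
    · intro d _ hd; rw [hreg, if_neg (fun hc => hd hc.1.symm), mul_zero, zero_smul]
    · intro h; simp at h
  · intro g _ hg
    rw [Finset.sum_eq_zero]
    intro d _
    rw [hreg, if_neg (fun hc => hg hc.2), mul_zero, zero_smul]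
  · intro h; simp at h

lemma finSplit {L : ℕ} (n : Fin L) :
    (List.finRange L).reverse =
      (List.ofFn (fun i : Fin (L - 1 - n.1) => (⟨L - 1 - i.1, by have := i.2; have := n.2; exact Nat.lt_of_lt_of_le (by omega) (le_refl L)⟩ : Fin L)))
      ++ n :: (List.ofFn (fun i : Fin n.1 => (⟨n.1 - 1 - i.1, by have := i.2; have := n.2; exact Nat.lt_of_lt_of_le (by omega) (le_refl L)⟩ : Fin L))) := by
  have hn := n.2
  apply List.ext_getElem
  · simp; omega
  · intro m h1 h2
    rw [List.getElem_reverse, List.getElem_finRange]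
    by_cases hm : m < L - 1 - n.1
    · rw [List.getElem_append_left (by simpa using hm)]
      rw [List.getElem_ofFn]
      apply Fin.ext
      simp at h1 ⊢
      try omega
    · rw [List.getElem_append_right (by simpa using hm)]
      simp only [List.length_ofFn]
      rcases Nat.eq_or_lt_of_le (Nat.le_of_not_lt hm) with he | hlt
      · rw [List.getElem_cons, dif_pos (by omega)]
        apply Fin.ext
        simp at h1 ⊢
        try omega
      · rw [List.getElem_cons]
        rw [dif_neg (by omega)]
        rw [List.getElem_ofFn]
        apply Fin.ext
        simp at h1 ⊢
        try omega


/-- For a regular `R`-matrix (satisfying the Yang-Baxter equation and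
compatible with the grading), the super trace of the inhomogeneous monodromy
matrix `T(u) = L_L(u,ξ_L) ⋯ L_1(u,ξ_1)` evaluated at `ξ_n` equals the product
of fermionic `R`-operators implementing the cyclic shift:
`str(T(ξ_n)) = R^f_{n,n-1} ⋯ R^f_{n,1} R^f_{n,L} ⋯ R^f_{n,n+1}`, where
`R^f_{jk} = R^f_{jk}(ξ_j,ξ_k)`. Sites are 0-indexed here. -/
theorem str_monodromy_eq_shift {L N : ℕ} (p : Fin N → ℕ)
    (Rm : ℂ → ℂ → Fin N → Fin N → Fin N → Fin N → ℂ) (ξ : Fin L → ℂ)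
    (hreg : ∀ v α β γ δ, Rm v v α β γ δ = if α = δ ∧ β = γ then 1 else 0)
    (hcomp : ∀ u v α β γ δ, ((p α + p β + p γ + p δ : ℕ) : ZMod 2) ≠ 0 →
      Rm u v α β γ δ = 0)
    (hybe : ∀ u v w, ∀ α β γ α'' β'' γ'',
      (∑ α', ∑ β', ∑ γ',
        Rm u v α β α' β' * Rm u w α' γ α'' γ' * Rm v w β' γ' β'' γ'') =
      (∑ α', ∑ β', ∑ γ',
        Rm v w β γ β' γ' * Rm u w α γ' α' γ'' * Rm u v α' β' α'' β''))
    (n : Fin L) :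
    str p (Tm p Rm ξ (ξ n)) =
      ((List.ofFn (fun i : Fin n.1 =>
          Rf p (Rm (ξ n) (ξ ⟨n.1 - 1 - i.1, by have := i.2; have := n.2; omega⟩))
            n ⟨n.1 - 1 - i.1, by have := i.2; have := n.2; omega⟩)) ++
        (List.ofFn (fun i : Fin (L - 1 - n.1) =>
          Rf p (Rm (ξ n) (ξ ⟨L - 1 - i.1, by have := n.2; omega⟩))
            n ⟨L - 1 - i.1, by have := n.2; omega⟩))).prod := by
  have hn := n.2
  set u := ξ n with hu
  set Asites : List (Fin L) := List.ofFn (fun i : Fin n.1 =>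
    (⟨n.1 - 1 - i.1, by have := i.2; have := n.2; omega⟩ : Fin L)) with hA
  set Bsites : List (Fin L) := List.ofFn (fun i : Fin (L - 1 - n.1) =>
    (⟨L - 1 - i.1, by have := n.2; omega⟩ : Fin L)) with hB
  have hnA : n ∉ Asites := by
    intro h
    rw [hA, List.mem_ofFn] at h
    obtain ⟨i, hi⟩ := h
    have := i.2
    rw [Fin.ext_iff] at hi
    simp at hi
    omega
  have hnB : n ∉ Bsites := by
    intro h
    rw [hB, List.mem_ofFn] at h
    obtain ⟨i, hi⟩ := h
    have := i.2
    rw [Fin.ext_iff] at hi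
    simp at hi
    omega
  have hdisj : ∀ m ∈ Asites, m ∉ Bsites := by
    intro m hm hmB
    rw [hA, List.mem_ofFn] at hm
    rw [hB, List.mem_ofFn] at hmB
    obtain ⟨i, hi⟩ := hm
    obtain ⟨j, hj⟩ := hmB
    have := i.2
    have := j.2
    rw [Fin.ext_iff] at hi hj
    simp at hi hj
    omega
  -- RHS
  have hRHS1 : (List.ofFn (fun i : Fin n.1 =>
      Rf p (Rm u (ξ ⟨n.1 - 1 - i.1, by have := i.2; have := n.2; omega⟩))
        n ⟨n.1 - 1 - i.1, by have := i.2; have := n.2; omega⟩))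
      = Asites.map (fun k => Rf p (Rm u (ξ k)) n k) := by
    rw [hA, List.map_ofFn]; rfl
  have hRHS2 : (List.ofFn (fun i : Fin (L - 1 - n.1) =>
      Rf p (Rm u (ξ ⟨L - 1 - i.1, by have := n.2; omega⟩))
        n ⟨L - 1 - i.1, by have := n.2; omega⟩))
      = Bsites.map (fun k => Rf p (Rm u (ξ k)) n k) := by
    rw [hB, List.map_ofFn]; rfl
  rw [hRHS1, hRHS2, ← List.map_append]
  rw [shiftProd p Rm ξ u hcomp n (Asites ++ Bsites)
    (by rw [List.mem_append]; rintro (h | h); exacts [hnA h, hnB h])]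
  -- LHS
  unfold Tm
  rw [← List.map_reverse, finSplit n, ← hA, ← hB]
  rw [List.map_append, List.map_cons, List.prod_append, List.prod_cons]
  unfold str
  rw [← hu]
  simp only [Matrix.mul_apply, prod_entry, Lmat_reg p Rm hreg n u, Finset.mul_sum,
    Finset.sum_mul, smul_mul_assoc, mul_smul_comm, smul_smul, Finset.smul_sum]
  conv_rhs => simp only [opProd_append, Finset.mul_sum, Finset.smul_sum]
  have key2 : ∀ α a b : Fin N, opProd p Rm ξ u Bsites α a * (E p n b a * opProd p Rm ξ u Asites b α)
      = (-1:ℂ)^((p α + p a) * (p b + p a)) •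
        (E p n b a * (opProd p Rm ξ u Bsites α a * opProd p Rm ξ u Asites b α)) := by
    intro α a b
    rw [← mul_assoc, opProd_E_comm p Rm ξ u hcomp Bsites hnB α a b a, smul_mul_assoc, mul_assoc]
  have key3 : ∀ a' b' e : Fin N, opProd p Rm ξ u Asites a' e * opProd p Rm ξ u Bsites e b'
      = (-1:ℂ)^((p a' + p e) * (p e + p b')) •
        (opProd p Rm ξ u Bsites e b' * opProd p Rm ξ u Asites a' e) :=
    fun a' b' e => opProd_opProd_comm p Rm ξ u hcomp Asites Bsites hdisj a' e e b'
  simp only [key2, key3, mul_smul_comm, smul_smul]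
  conv_rhs => rw [sum_rot]
  refine Finset.sum_congr rfl fun α _ => ?_
  refine Finset.sum_congr rfl fun a _ => ?_
  refine Finset.sum_congr rfl fun b _ => ?_
  congr 1
  rw [show (-1:ℂ)^(p α) * (-1:ℂ)^(p a * p b) * (-1:ℂ)^((p α + p a) * (p b + p a))
      = (-1:ℂ)^(p α + p a * p b + (p α + p a) * (p b + p a)) by rw [pow_add, pow_add]]
  rw [show (-1:ℂ)^(p a * (1 + p b)) * (-1:ℂ)^((p b + p α) * (p α + p a))
      = (-1:ℂ)^(p a * (1 + p b) + (p b + p α) * (p α + p a)) from (pow_add _ _ _).symm]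
  apply npz
  push_cast
  generalize (p α : ZMod 2) = X
  generalize (p a : ZMod 2) = A
  generalize (p b : ZMod 2) = B
  revert X A B; decide
end

section
/- For a regular and unitary R-matrix compatible with the grading, the solution of the quantum inverse problem holds: e_n{}_α^β = (-1)^{p(α)p(β)} (∏_{j=1}^{n-1} str(T(ξ_j))) · T^β_α(ξ_n) · (∏_{j=n+1}^{L} str(T(ξ_j))), where T(u) = L_L(u,ξ_L) ⋯ L_1(u,ξ_1) is the inhomogeneous monodromy matrix. -/
open Matrix BigOperators

lemma neg_one_pow_congr' {a b : ℕ} (h : (a : ZMod 2) = b) : (-1:ℂ)^a = (-1:ℂ)^b := by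
  have h2 : a % 2 = b % 2 := (ZMod.natCast_eq_natCast_iff a b 2).1 h
  rw [← Nat.div_add_mod a 2, ← Nat.div_add_mod b 2, pow_add, pow_add, pow_mul, pow_mul, h2]
  norm_num

lemma List_map_coe_finRange (n : ℕ) :
    (List.finRange n).map (fun i : Fin n => (i : ℕ)) = List.range n :=
  List.ext_getElem (by simp) (by simp)

namespace QIP
variable {L N : ℕ} (p : Fin N → ℕ)

lemma E_apply (j : Fin L) (α β : Fin N) (x y : Conf L N) :
    E p j α β x y = if x j = α ∧ y j = β ∧ ∀ k, k ≠ j → x k = y k then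
    (-1 : ℂ) ^ ((p α + p β) * ∑ k ∈ Finset.univ.filter (fun k => j < k), p (x k))
  else 0 := rfl

private lemma interm_eq {j : Fin L} {β : Fin N} {x y : Conf L N}
    (h1 : y j = β) (h2 : ∀ k, k ≠ j → x k = y k) : y = Function.update x j β := by
  funext k
  by_cases hk : k = j
  · subst hk; simpa using h1
  · rw [Function.update_of_ne hk]; exact (h2 k hk).symm

private lemma update_sum (j : Fin L) (β : Fin N) (x : Conf L N) :
    ∑ k ∈ Finset.univ.filter (fun k => j < k), p (Function.update x j β k)
        = ∑ k ∈ Finset.univ.filter (fun k => j < k), p (x k) := by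
  refine Finset.sum_congr rfl fun k hk => ?_
  have : k ≠ j := by
    simp only [Finset.mem_filter] at hk
    exact fun h => absurd hk.2 (by simp [h])
  rw [Function.update_of_ne this]

lemma E_mul_same (j : Fin L) (α β γ δ : Fin N) :
    E p j α β * E p j γ δ = if β = γ then E p j α δ else 0 := by
  by_cases hb : β = γ
  · subst hb; rw [if_pos rfl]
    ext x z
    rw [Matrix.mul_apply, Finset.sum_eq_single (Function.update x j β)]
    · rw [E_apply, E_apply, E_apply, update_sum]
      by_cases h1 : x j = α
      · by_cases h2 : z j = δ ∧ ∀ k, k ≠ j → x k = z k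
        · rw [if_pos ⟨h1, Function.update_self _ _ _,
              fun k hk => (Function.update_of_ne hk β x).symm⟩,
            if_pos ⟨Function.update_self _ _ _, h2.1,
              fun k hk => (Function.update_of_ne hk β x) ▸ h2.2 k hk⟩,
            if_pos ⟨h1, h2⟩, ← pow_add]
          have : (p α + p β) * (∑ k ∈ Finset.univ.filter (fun k => j < k), p (x k))
              + (p β + p δ) * (∑ k ∈ Finset.univ.filter (fun k => j < k), p (x k))
              = (p α + p δ) * (∑ k ∈ Finset.univ.filter (fun k => j < k), p (x k))
              + 2 * (p β * (∑ k ∈ Finset.univ.filter (fun k => j < k), p (x k))) := by ring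
          rw [this, pow_add, pow_mul]; norm_num
        · have hz : (if Function.update x j β j = β ∧ z j = δ ∧
              ∀ k, k ≠ j → Function.update x j β k = z k then
              ((-1:ℂ)) ^ ((p β + p δ) * ∑ k ∈ Finset.univ.filter (fun k => j < k), p (x k))
              else 0) = 0 := by
            rw [if_neg]
            rintro ⟨-, hz, hk⟩
            exact h2 ⟨hz, fun k hk' => by
              rw [← Function.update_of_ne hk' β x]; exact hk k hk'⟩
          rw [hz, mul_zero, if_neg (fun h => h2 h.2)]
      · rw [if_neg (fun h => h1 h.1), zero_mul, if_neg (fun h => h1 h.1)]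
    · intro y _ hy
      by_cases hc : x j = α ∧ y j = β ∧ ∀ k, k ≠ j → x k = y k
      · exact absurd (interm_eq hc.2.1 hc.2.2) hy
      · rw [E_apply, if_neg hc, zero_mul]
    · intro h; exact absurd (Finset.mem_univ _) h
  · rw [if_neg hb]
    ext x z
    rw [Matrix.mul_apply]
    refine Finset.sum_eq_zero fun y _ => ?_
    by_cases hc : x j = α ∧ y j = β ∧ ∀ k, k ≠ j → x k = y k
    · rw [E_apply p j γ δ, if_neg, mul_zero]
      rintro ⟨hg, -⟩
      exact hb (hc.2.1.symm.trans hg)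
    · rw [E_apply, if_neg hc, zero_mul]

lemma E_sum_diag (j : Fin L) : (∑ α, E p j α α) = 1 := by
  ext x z
  rw [Matrix.sum_apply]
  by_cases hxz : x = z
  · subst hxz
    rw [Finset.sum_eq_single (x j), Matrix.one_apply_eq]
    · rw [E_apply, if_pos ⟨rfl, rfl, fun _ _ => rfl⟩, ← two_mul, mul_assoc, pow_mul]
      norm_num
    · intro b _ hb
      rw [E_apply, if_neg]
      rintro ⟨h, -⟩; exact hb h.symm
    · intro h; exact absurd (Finset.mem_univ _) h
  · rw [Matrix.one_apply_ne hxz]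
    refine Finset.sum_eq_zero fun b _ => ?_
    rw [E_apply, if_neg]
    rintro ⟨ha, hb, hk⟩
    exact hxz (funext fun k => by
      by_cases hkj : k = j
      · subst hkj; rw [ha, hb]
      · exact hk k hkj)


/-- updating at a site `j` not above `k` doesn't change the sum over sites above `k`. -/
private lemma update_sum_of_not_lt {k j : Fin L} (h : ¬ k < j) (β : Fin N) (x : Conf L N) :
    ∑ l ∈ Finset.univ.filter (fun l => k < l), p (Function.update x j β l)
        = ∑ l ∈ Finset.univ.filter (fun l => k < l), p (x l) := by
  refine Finset.sum_congr rfl fun l hl => ?_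
  have : l ≠ j := by
    simp only [Finset.mem_filter] at hl
    rintro rfl; exact h hl.2
  rw [Function.update_of_ne this]

private lemma update_sum_of_lt {j k : Fin L} (h : j < k) (d : Fin N) (x : Conf L N) :
    ∑ l ∈ Finset.univ.filter (fun l => j < l), p (Function.update x k d l)
        = (∑ l ∈ (Finset.univ.filter (fun l => j < l)) \ {k}, p (x l)) + p d := by
  have hk : k ∈ Finset.univ.filter (fun l => j < l) := by simp [h]
  rw [Finset.sum_eq_sum_sdiff_singleton_add hk]
  congr 1
  · refine Finset.sum_congr rfl fun l hl => ?_
    have : l ≠ k := by simp only [Finset.mem_sdiff, Finset.mem_singleton] at hl; exact hl.2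
    rw [Function.update_of_ne this]
  · rw [Function.update_self]

private lemma sum_split_of_lt {j k : Fin L} (h : j < k) (x : Conf L N) :
    ∑ l ∈ Finset.univ.filter (fun l => j < l), p (x l)
        = (∑ l ∈ (Finset.univ.filter (fun l => j < l)) \ {k}, p (x l)) + p (x k) := by
  have hk : k ∈ Finset.univ.filter (fun l => j < l) := by simp [h]
  rw [Finset.sum_eq_sum_sdiff_singleton_add hk]

/-- product of `E`'s at two distinct sites, explicit entry formula -/
lemma E_mul_apply {j k : Fin L} (h : j ≠ k) (a b c d : Fin N) (x z : Conf L N) :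
    (E p j a b * E p k c d) x z =
      if x j = a ∧ x k = c ∧ z j = b ∧ z k = d ∧
          (∀ l, l ≠ j → l ≠ k → x l = z l) then
        (-1:ℂ)^((p a + p b) * ∑ l ∈ Finset.univ.filter (fun l => j < l), p (x l)
          + (p c + p d) * ∑ l ∈ Finset.univ.filter (fun l => k < l),
              p (Function.update x j b l))
      else 0 := by
  rw [Matrix.mul_apply, Finset.sum_eq_single (Function.update x j b)]
  · rw [E_apply, E_apply]
    by_cases h1 : x j = a
    · by_cases h2 : x k = c ∧ z j = b ∧ z k = d ∧ ∀ l, l ≠ j → l ≠ k → x l = z l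
      · obtain ⟨hxk, hzj, hzk, hlz⟩ := h2
        have hB : ∀ l, l ≠ k → Function.update x j b l = z l := by
          intro l hl
          by_cases hlj : l = j
          · subst hlj; rw [Function.update_self]; exact hzj.symm
          · rw [Function.update_of_ne hlj]; exact hlz l hlj hl
        rw [if_pos ⟨h1, Function.update_self _ _ _,
            fun l hl => (Function.update_of_ne hl b x).symm⟩,
          if_pos ⟨by rw [Function.update_of_ne (Ne.symm h)]; exact hxk, hzk, hB⟩,
          if_pos ⟨h1, hxk, hzj, hzk, hlz⟩, pow_add]
      · have hB : ¬ (Function.update x j b k = c ∧ z k = d ∧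
            ∀ l, l ≠ k → Function.update x j b l = z l) := by
          rintro ⟨huk, hzk, hul⟩
          rw [Function.update_of_ne (show k ≠ j from fun hh => h hh.symm)] at huk
          refine h2 ⟨huk, ?_, hzk, fun l hlj hlk => ?_⟩
          · have := hul j (show j ≠ k from h)
            rw [Function.update_self] at this
            exact this.symm
          · have := hul l hlk
            rwa [Function.update_of_ne hlj] at this
        rw [if_neg hB, mul_zero, if_neg (fun hh => h2 hh.2)]
    · rw [if_neg (fun hh => h1 hh.1), zero_mul, if_neg (fun hh => h1 hh.1)]
  · intro y _ hy
    by_cases hc : x j = a ∧ y j = b ∧ ∀ l, l ≠ j → x l = y l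
    · exact absurd (interm_eq hc.2.1 hc.2.2) hy
    · rw [E_apply, if_neg hc, zero_mul]
  · intro hh; exact absurd (Finset.mem_univ _) hh

lemma E_comm {j k : Fin L} (h : j ≠ k) (a b c d : Fin N) :
    E p j a b * E p k c d
      = ((-1:ℂ)^((p a + p b) * (p c + p d))) • (E p k c d * E p j a b) := by
  ext x z
  rw [Matrix.smul_apply, E_mul_apply p h, E_mul_apply p (Ne.symm h), smul_eq_mul]
  by_cases hc : x j = a ∧ x k = c ∧ z j = b ∧ z k = d ∧ ∀ l, l ≠ j → l ≠ k → x l = z l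
  · obtain ⟨h1, h2, h3, h4, h5⟩ := hc
    rw [if_pos ⟨h1, h2, h3, h4, h5⟩,
      if_pos ⟨h2, h1, h4, h3, fun l hlk hlj => h5 l hlj hlk⟩]
    rw [← pow_add]
    apply neg_one_pow_congr'
    rcases lt_or_gt_of_ne h with hlt | hgt
    · rw [update_sum_of_not_lt p (by exact fun hh => absurd (hh.trans hlt) (lt_irrefl _)) b x,
        update_sum_of_lt p hlt d x, sum_split_of_lt p hlt x, h2]
      generalize (∑ l ∈ (Finset.univ.filter (fun l => j < l)) \ {k}, p (x l) : ℕ) = r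
      generalize (∑ l ∈ Finset.univ.filter (fun l => k < l), p (x l) : ℕ) = t
      push_cast
      generalize (p a : ZMod 2) = A
      generalize (p b : ZMod 2) = B
      generalize (p c : ZMod 2) = C
      generalize (p d : ZMod 2) = D
      generalize (r : ZMod 2) = R
      generalize (t : ZMod 2) = T
      revert A B C D R T
      decide
    · rw [update_sum_of_not_lt p (by exact fun hh => absurd (hh.trans hgt) (lt_irrefl _)) d x,
        update_sum_of_lt p hgt b x, sum_split_of_lt p hgt x, h1]
      generalize (∑ l ∈ (Finset.univ.filter (fun l => k < l)) \ {j}, p (x l) : ℕ) = r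
      generalize (∑ l ∈ Finset.univ.filter (fun l => j < l), p (x l) : ℕ) = t
      push_cast
      generalize (p a : ZMod 2) = A
      generalize (p b : ZMod 2) = B
      generalize (p c : ZMod 2) = C
      generalize (p d : ZMod 2) = D
      generalize (r : ZMod 2) = R
      generalize (t : ZMod 2) = T
      revert A B C D R T
      decide
  · have hC2 : ¬ (x k = c ∧ x j = a ∧ z k = d ∧ z j = b ∧
        ∀ l, l ≠ k → l ≠ j → x l = z l) := by
      rintro ⟨h2, h1, h4, h3, h5⟩
      exact hc ⟨h1, h2, h3, h4, fun l hlj hlk => h5 l hlk hlj⟩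
    rw [if_neg hc, if_neg hC2, mul_zero]

variable (Rm : ℂ → ℂ → Fin N → Fin N → Fin N → Fin N → ℂ)

/-- two-site R operator: `Ř_{jk}(u,v)` acting on sites `j,k`. -/
noncomputable def Rop (u v : ℂ) (j k : Fin L) : Matrix (Conf L N) (Conf L N) ℂ :=
  ∑ a, ∑ b, ∑ c, ∑ d,
    ((-1:ℂ)^(p a * p b + p b + p a * p c) * Rm u v a c b d) • (E p j a b * E p k c d)

/-- an even pair of E's commutes with any E at a third site -/
lemma E_pair_comm {j k n : Fin L} (hj : j ≠ n) (hk : k ≠ n)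
    (a b c d e f : Fin N) (hpar : ((p a + p b + p c + p d : ℕ) : ZMod 2) = 0) :
    (E p j a b * E p k c d) * E p n e f = E p n e f * (E p j a b * E p k c d) := by
  rw [mul_assoc, E_comm p hk c d e f, mul_smul_comm, ← mul_assoc,
    E_comm p hj a b e f, smul_mul_assoc, smul_smul, ← pow_add, mul_assoc]
  have : ((-1:ℂ))^((p c + p d) * (p e + p f) + (p a + p b) * (p e + p f)) = 1 := by
    have h1 : ((-1:ℂ))^((p c + p d) * (p e + p f) + (p a + p b) * (p e + p f))
        = (-1:ℂ)^(0:ℕ) := by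
      apply neg_one_pow_congr'
      push_cast at hpar ⊢
      generalize (p a : ZMod 2) = A at hpar ⊢
      generalize (p b : ZMod 2) = B at hpar ⊢
      generalize (p c : ZMod 2) = C at hpar ⊢
      generalize (p d : ZMod 2) = D at hpar ⊢
      generalize (p e : ZMod 2) = X
      generalize (p f : ZMod 2) = Y
      revert hpar
      revert A B C D X Y
      decide
    rw [h1, pow_zero]
  rw [this, one_smul]

/-- Rop commutes with any E at a third site (needs grading compatibility). -/
lemma Rop_E_comm (hcomp : ∀ u v α β γ δ, ((p α + p β + p γ + p δ : ℕ) : ZMod 2) ≠ 0 →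
      Rm u v α β γ δ = 0) {j k n : Fin L} (hj : j ≠ n) (hk : k ≠ n) (u v : ℂ)
    (e f : Fin N) :
    Rop p Rm u v j k * E p n e f = E p n e f * Rop p Rm u v j k := by
  rw [Rop, Finset.sum_mul, Finset.mul_sum]
  refine Finset.sum_congr rfl fun a _ => ?_
  rw [Finset.sum_mul, Finset.mul_sum]
  refine Finset.sum_congr rfl fun b _ => ?_
  rw [Finset.sum_mul, Finset.mul_sum]
  refine Finset.sum_congr rfl fun c _ => ?_
  rw [Finset.sum_mul, Finset.mul_sum]
  refine Finset.sum_congr rfl fun d _ => ?_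
  rw [smul_mul_assoc, mul_smul_comm]
  by_cases hR : Rm u v a c b d = 0
  · rw [hR, mul_zero, zero_smul, zero_smul]
  · have hpar : ((p a + p c + p b + p d : ℕ) : ZMod 2) = 0 := by
      by_contra hcon
      exact hR (hcomp u v a c b d hcon)
    have hpar' : ((p a + p b + p c + p d : ℕ) : ZMod 2) = 0 := by
      push_cast at hpar ⊢; linear_combination hpar
    rw [E_pair_comm p hj hk a b c d e f hpar']

/-- product of two-site E-pairs on the same pair of sites, in opposite order -/
lemma pair_mul {j k : Fin L} (h : j ≠ k) (a b c d a' b' c' d' : Fin N) :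
    (E p j a b * E p k c d) * (E p k a' b' * E p j c' d') =
      if d = a' ∧ b = c' then
        ((-1:ℂ)^((p c + p b') * (p b + p d'))) • (E p j a d' * E p k c b')
      else 0 := by
  have step1 : (E p j a b * E p k c d) * (E p k a' b' * E p j c' d')
      = E p j a b * ((E p k c d * E p k a' b') * E p j c' d') := by
    rw [mul_assoc, mul_assoc]
  rw [step1, E_mul_same p k c d a' b']
  by_cases h1 : d = a'
  · rw [if_pos h1, E_comm p (Ne.symm h) c b' c' d', mul_smul_comm,
      ← mul_assoc, E_mul_same p j a b c' d']
    by_cases h2 : b = c'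
    · rw [if_pos h2, if_pos ⟨h1, h2⟩, h2]
    · rw [if_neg h2, if_neg (fun hh => h2 hh.2), zero_mul, smul_zero]
  · rw [if_neg h1, if_neg (fun hh => h1 hh.1), zero_mul, mul_zero]


lemma swap3 {M : Type*} [AddCommMonoid M] (F : Fin N → Fin N → Fin N → M) :
    (∑ b, ∑ d, ∑ c, F b d c) = ∑ c, ∑ b, ∑ d, F b d c := by
  calc (∑ b, ∑ d, ∑ c, F b d c)
      = ∑ b, ∑ c, ∑ d, F b d c := Finset.sum_congr rfl fun b _ => Finset.sum_comm
    _ = ∑ c, ∑ b, ∑ d, F b d c := Finset.sum_comm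

lemma swap4 {M : Type*} [AddCommMonoid M] (F : Fin N → Fin N → Fin N → Fin N → M) :
    (∑ b, ∑ d, ∑ b', ∑ d', F b d b' d') = ∑ b', ∑ d', ∑ b, ∑ d, F b d b' d' := by
  rw [swap3 (fun b d b' => ∑ d', F b d b' d')]
  exact Finset.sum_congr rfl fun b' _ => swap3 _

lemma inner_collapse {j k : Fin L} (h : j ≠ k) (u v : ℂ) (a b c d : Fin N) :
    (E p j a b * E p k c d) * Rop p Rm v u k j
      = ∑ b', ∑ d',
        (((-1:ℂ)^(p d * p b' + p b' + p d * p b) * Rm v u d b b' d'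
          * (-1:ℂ)^((p c + p b') * (p b + p d')))
          • (E p j a d' * E p k c b')) := by
  rw [Rop, Finset.mul_sum, Finset.sum_eq_single d]
  · rw [Finset.mul_sum]
    refine Finset.sum_congr rfl fun b' _ => ?_
    rw [Finset.mul_sum, Finset.sum_eq_single b]
    · rw [Finset.mul_sum]
      refine Finset.sum_congr rfl fun d' _ => ?_
      rw [mul_smul_comm, pair_mul p h a b c d d b' b d', if_pos ⟨rfl, rfl⟩, smul_smul]
    · intro c' _ hc'
      rw [Finset.mul_sum]
      refine Finset.sum_eq_zero fun d' _ => ?_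
      rw [mul_smul_comm, pair_mul p h a b c d d b' c' d',
        if_neg (fun hh => hc' hh.2.symm), smul_zero]
    · intro hmem; exact absurd (Finset.mem_univ _) hmem
  · intro a' _ ha'
    rw [Finset.mul_sum]
    refine Finset.sum_eq_zero fun b' _ => ?_
    rw [Finset.mul_sum]
    refine Finset.sum_eq_zero fun c' _ => ?_
    rw [Finset.mul_sum]
    refine Finset.sum_eq_zero fun d' _ => ?_
    rw [mul_smul_comm, pair_mul p h a b c d a' b' c' d',
      if_neg (fun hh => ha' hh.1.symm), smul_zero]
  · intro hmem; exact absurd (Finset.mem_univ _) hmem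

lemma scalar_eval
    (huni : ∀ u v α β α' β',
      (∑ γ, ∑ δ, Rm u v α β γ δ * Rm v u δ γ α' β') =
        if α = β' ∧ β = α' then 1 else 0)
    (hcomp : ∀ u v α β γ δ, ((p α + p β + p γ + p δ : ℕ) : ZMod 2) ≠ 0 →
      Rm u v α β γ δ = 0)
    (u v : ℂ) (a c b' d' : Fin N) :
    (∑ b, ∑ d, ((-1:ℂ)^(p a * p b + p b + p a * p c) * Rm u v a c b d)
      * ((-1:ℂ)^(p d * p b' + p b' + p d * p b) * Rm v u d b b' d'
          * (-1:ℂ)^((p c + p b') * (p b + p d'))))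
      = if a = d' ∧ c = b' then 1 else 0 := by
  have key : ∀ b d : Fin N,
      ((-1:ℂ)^(p a * p b + p b + p a * p c) * Rm u v a c b d)
        * ((-1:ℂ)^(p d * p b' + p b' + p d * p b) * Rm v u d b b' d'
          * (-1:ℂ)^((p c + p b') * (p b + p d')))
      = ((-1:ℂ)^(p a * p c + p a * p b' + p c * p b' + p b' + p c * p d' + p b' * p d'))
        * (Rm u v a c b d * Rm v u d b b' d') := by
    intro b d
    by_cases hR : Rm u v a c b d = 0
    · rw [hR]; ring
    · have hpar : ((p a + p c + p b + p d : ℕ) : ZMod 2) = 0 := by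
        by_contra hcon; exact hR (hcomp u v a c b d hcon)
      have hsgn : (-1:ℂ)^(p a * p b + p b + p a * p c)
          * ((-1:ℂ)^(p d * p b' + p b' + p d * p b)
            * (-1:ℂ)^((p c + p b') * (p b + p d')))
          = (-1:ℂ)^(p a * p c + p a * p b' + p c * p b' + p b' + p c * p d' + p b' * p d') := by
        rw [← pow_add, ← pow_add]
        apply neg_one_pow_congr'
        push_cast at hpar ⊢
        generalize (p a : ZMod 2) = A at hpar ⊢
        generalize (p b : ZMod 2) = B at hpar ⊢
        generalize (p c : ZMod 2) = C at hpar ⊢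
        generalize (p d : ZMod 2) = D at hpar ⊢
        generalize (p b' : ZMod 2) = X
        generalize (p d' : ZMod 2) = Y
        revert hpar
        revert A B C D X Y
        decide
      calc ((-1:ℂ)^(p a * p b + p b + p a * p c) * Rm u v a c b d)
          * ((-1:ℂ)^(p d * p b' + p b' + p d * p b) * Rm v u d b b' d'
            * (-1:ℂ)^((p c + p b') * (p b + p d')))
          = ((-1:ℂ)^(p a * p b + p b + p a * p c)
            * ((-1:ℂ)^(p d * p b' + p b' + p d * p b)
              * (-1:ℂ)^((p c + p b') * (p b + p d'))))
            * (Rm u v a c b d * Rm v u d b b' d') := by ring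
        _ = _ := by rw [hsgn]
  calc (∑ b, ∑ d, ((-1:ℂ)^(p a * p b + p b + p a * p c) * Rm u v a c b d)
      * ((-1:ℂ)^(p d * p b' + p b' + p d * p b) * Rm v u d b b' d'
          * (-1:ℂ)^((p c + p b') * (p b + p d'))))
      = ∑ b, ∑ d, ((-1:ℂ)^(p a * p c + p a * p b' + p c * p b' + p b' + p c * p d' + p b' * p d'))
        * (Rm u v a c b d * Rm v u d b b' d') := by
        exact Finset.sum_congr rfl fun b _ => Finset.sum_congr rfl fun d _ => key b d
    _ = ((-1:ℂ)^(p a * p c + p a * p b' + p c * p b' + p b' + p c * p d' + p b' * p d'))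
        * ∑ b, ∑ d, Rm u v a c b d * Rm v u d b b' d' := by
        rw [Finset.mul_sum]
        exact Finset.sum_congr rfl fun b _ => (Finset.mul_sum _ _ _).symm
    _ = if a = d' ∧ c = b' then 1 else 0 := by
        rw [huni u v a c b' d']
        by_cases hif : a = d' ∧ c = b'
        · rw [if_pos hif, mul_one]
          obtain ⟨h1, h2⟩ := hif; subst h1; subst h2
          have : (-1:ℂ)^(p a * p c + p a * p c + p c * p c + p c + p c * p a + p c * p a)
              = (-1:ℂ)^(0:ℕ) := by
            apply neg_one_pow_congr'
            push_cast
            generalize (p a : ZMod 2) = A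
            generalize (p c : ZMod 2) = C
            revert A C
            decide
          rw [this, pow_zero]
        · rw [if_neg hif, mul_zero]

lemma Rop_unitary
    (huni : ∀ u v α β α' β',
      (∑ γ, ∑ δ, Rm u v α β γ δ * Rm v u δ γ α' β') =
        if α = β' ∧ β = α' then 1 else 0)
    (hcomp : ∀ u v α β γ δ, ((p α + p β + p γ + p δ : ℕ) : ZMod 2) ≠ 0 →
      Rm u v α β γ δ = 0)
    {j k : Fin L} (h : j ≠ k) (u v : ℂ) :
    Rop p Rm u v j k * Rop p Rm v u k j = 1 := by
  have expand : Rop p Rm u v j k * Rop p Rm v u k j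
      = ∑ a, ∑ b, ∑ c, ∑ d, ∑ b', ∑ d',
        ((((-1:ℂ)^(p a * p b + p b + p a * p c) * Rm u v a c b d)
          * ((-1:ℂ)^(p d * p b' + p b' + p d * p b) * Rm v u d b b' d'
          * (-1:ℂ)^((p c + p b') * (p b + p d'))))
          • (E p j a d' * E p k c b')) := by
    rw [Rop, Finset.sum_mul]
    refine Finset.sum_congr rfl fun a _ => ?_
    rw [Finset.sum_mul]
    refine Finset.sum_congr rfl fun b _ => ?_
    rw [Finset.sum_mul]
    refine Finset.sum_congr rfl fun c _ => ?_
    rw [Finset.sum_mul]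
    refine Finset.sum_congr rfl fun d _ => ?_
    rw [smul_mul_assoc, inner_collapse p Rm h u v a b c d, Finset.smul_sum]
    refine Finset.sum_congr rfl fun b' _ => ?_
    rw [Finset.smul_sum]
    refine Finset.sum_congr rfl fun d' _ => ?_
    rw [smul_smul]
  rw [expand]
  have reorder : ∀ a : Fin N, (∑ b, ∑ c, ∑ d, ∑ b', ∑ d',
        ((((-1:ℂ)^(p a * p b + p b + p a * p c) * Rm u v a c b d)
          * ((-1:ℂ)^(p d * p b' + p b' + p d * p b) * Rm v u d b b' d'
          * (-1:ℂ)^((p c + p b') * (p b + p d'))))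
          • (E p j a d' * E p k c b')))
      = ∑ c, ∑ b', ∑ d', (∑ b, ∑ d,
        (((-1:ℂ)^(p a * p b + p b + p a * p c) * Rm u v a c b d)
          * ((-1:ℂ)^(p d * p b' + p b' + p d * p b) * Rm v u d b b' d'
          * (-1:ℂ)^((p c + p b') * (p b + p d')))))
          • (E p j a d' * E p k c b') := by
    intro a
    rw [Finset.sum_comm]
    refine Finset.sum_congr rfl fun c _ => ?_
    rw [swap4]
    refine Finset.sum_congr rfl fun b' _ => ?_
    refine Finset.sum_congr rfl fun d' _ => ?_
    rw [Finset.sum_smul]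
    exact Finset.sum_congr rfl fun b _ => (Finset.sum_smul).symm
  calc (∑ a, ∑ b, ∑ c, ∑ d, ∑ b', ∑ d',
        ((((-1:ℂ)^(p a * p b + p b + p a * p c) * Rm u v a c b d)
          * ((-1:ℂ)^(p d * p b' + p b' + p d * p b) * Rm v u d b b' d'
          * (-1:ℂ)^((p c + p b') * (p b + p d'))))
          • (E p j a d' * E p k c b')))
      = ∑ a, ∑ c, ∑ b', ∑ d',
          ((if a = d' ∧ c = b' then (1:ℂ) else 0) • (E p j a d' * E p k c b')) := by
        refine Finset.sum_congr rfl fun a _ => ?_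
        rw [reorder a]
        refine Finset.sum_congr rfl fun c _ => ?_
        refine Finset.sum_congr rfl fun b' _ => ?_
        refine Finset.sum_congr rfl fun d' _ => ?_
        rw [scalar_eval p Rm huni hcomp u v a c b' d']
    _ = ∑ a, ∑ c, E p j a a * E p k c c := by
        refine Finset.sum_congr rfl fun a _ => Finset.sum_congr rfl fun c _ => ?_
        rw [Finset.sum_eq_single c]
        · rw [Finset.sum_eq_single a]
          · rw [if_pos ⟨rfl, rfl⟩, one_smul]
          · intro d' _ hd'
            rw [if_neg (fun hh => hd' hh.1.symm), zero_smul]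
          · intro hmem; exact absurd (Finset.mem_univ _) hmem
        · intro b' _ hb'
          refine Finset.sum_eq_zero fun d' _ => ?_
          rw [if_neg (fun hh => hb' hh.2.symm), zero_smul]
        · intro hmem; exact absurd (Finset.mem_univ _) hmem
    _ = 1 := by
        rw [← Finset.sum_mul_sum, E_sum_diag, E_sum_diag, one_mul]


/-- graded permutation as an operator-valued matrix -/
noncomputable def Pim (n : Fin L) :
    Matrix (Fin N) (Fin N) (Matrix (Conf L N) (Conf L N) ℂ) :=
  Matrix.of fun a b => ((-1:ℂ)^(p a * p b)) • E p n b a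

/-- regularity: the L-matrix at coinciding parameters is the graded permutation -/
lemma Lmat_reg (hreg : ∀ v α β γ δ, Rm v v α β γ δ = if α = δ ∧ β = γ then 1 else 0)
    (n : Fin L) (v : ℂ) : Lmat p Rm n v v = Pim p n := by
  refine Matrix.ext fun a b => ?_
  rw [Lmat, Pim, Matrix.of_apply, Matrix.of_apply, Finset.sum_eq_single b]
  · rw [Finset.sum_eq_single a]
    · rw [hreg, if_pos ⟨rfl, rfl⟩, mul_one]
    · intro d _ hd
      rw [hreg, if_neg (fun hh => hd hh.1.symm), mul_zero, zero_smul]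
    · intro hmem; exact absurd (Finset.mem_univ _) hmem
  · intro c _ hc
    refine Finset.sum_eq_zero fun d _ => ?_
    rw [hreg, if_neg (fun hh => hc hh.2), mul_zero, zero_smul]
  · intro hmem; exact absurd (Finset.mem_univ _) hmem

/-- triple product helper -/
lemma E_EE_E {j n : Fin L} (h : j ≠ n) (e f c d b a : Fin N) :
    (E p n e f * E p j c d) * E p n b a
      = ((-1:ℂ)^((p c + p d) * (p b + p a)))
        • ((if f = b then E p n e a else 0) * E p j c d) := by
  rw [mul_assoc, E_comm p h c d b a, mul_smul_comm, ← mul_assoc, E_mul_same p n e f b a]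

lemma E_E_EE {j n : Fin L} (h : j ≠ n) (b a e f c d : Fin N) :
    E p n b a * (E p n e f * E p j c d)
      = (if a = e then E p n b f else 0) * E p j c d := by
  rw [← mul_assoc, E_mul_same p n b a e f]

lemma smul_mul_smul' {M : Type*} [Ring M] [Algebra ℂ M] (x y : ℂ) (A B : M) :
    (x • A) * (y • B) = (x * y) • (A * B) := by
  rw [smul_mul_assoc, mul_smul_comm, smul_smul]

/-- push `Pim` to the left through an `Lmat` (site `j ≠ n`). -/
lemma Pim_mul_Lmat
    (hcomp : ∀ u v α β γ δ, ((p α + p β + p γ + p δ : ℕ) : ZMod 2) ≠ 0 →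
      Rm u v α β γ δ = 0)
    {j n : Fin L} (h : j ≠ n) (u v : ℂ) :
    Pim p n * Lmat p Rm j u v
      = Matrix.of fun a b => Rop p Rm u v n j * Pim p n a b := by
  refine Matrix.ext fun a b => ?_
  rw [Matrix.mul_apply, Matrix.of_apply]
  have h1 : (∑ γ, Pim p n a γ * Lmat p Rm j u v γ b)
      = ∑ e, ∑ c, ∑ d, (((-1:ℂ)^(p a * p e)) * ((-1:ℂ)^(p e * p c) * Rm u v e c b d))
          • (E p n e a * E p j c d) := by
    refine Finset.sum_congr rfl fun e _ => ?_
    rw [Pim, Lmat, Matrix.of_apply, Matrix.of_apply, Finset.mul_sum]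
    refine Finset.sum_congr rfl fun c _ => ?_
    rw [Finset.mul_sum]
    refine Finset.sum_congr rfl fun d _ => ?_
    rw [smul_mul_smul']
  have h2 : Rop p Rm u v n j * Pim p n a b
      = ∑ e, ∑ c, ∑ d, (((-1:ℂ)^(p e * p b + p b + p e * p c) * Rm u v e c b d)
          * ((-1:ℂ)^(p a * p b) * (-1:ℂ)^((p c + p d) * (p b + p a))))
          • (E p n e a * E p j c d) := by
    rw [Pim, Matrix.of_apply, Rop, Finset.sum_mul]
    refine Finset.sum_congr rfl fun e _ => ?_
    rw [Finset.sum_mul, Finset.sum_eq_single b]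
    · rw [Finset.sum_mul]
      refine Finset.sum_congr rfl fun c _ => ?_
      rw [Finset.sum_mul]
      refine Finset.sum_congr rfl fun d _ => ?_
      rw [smul_mul_smul', E_EE_E p h e b c d b a, if_pos rfl, smul_smul]
      congr 1
      ring
    · intro f _ hf
      rw [Finset.sum_mul]
      refine Finset.sum_eq_zero fun c _ => ?_
      rw [Finset.sum_mul]
      refine Finset.sum_eq_zero fun d _ => ?_
      rw [smul_mul_smul', E_EE_E p h e f c d b a, if_neg hf, zero_mul, smul_zero, smul_zero]
    · intro hmem; exact absurd (Finset.mem_univ _) hmem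
  rw [h1, h2]
  refine Finset.sum_congr rfl fun e _ => Finset.sum_congr rfl fun c _ =>
    Finset.sum_congr rfl fun d _ => ?_
  by_cases hR : Rm u v e c b d = 0
  · rw [hR]; simp
  · have hpar : ((p e + p c + p b + p d : ℕ) : ZMod 2) = 0 := by
      by_contra hcon; exact hR (hcomp u v e c b d hcon)
    congr 1
    have hsgn : (-1:ℂ)^(p a * p e + p e * p c)
        = (-1:ℂ)^(p e * p b + p b + p e * p c + (p a * p b + (p c + p d) * (p b + p a))) := by
      apply neg_one_pow_congr'
      push_cast at hpar ⊢
      generalize (p a : ZMod 2) = A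
      generalize (p b : ZMod 2) = B at hpar ⊢
      generalize (p c : ZMod 2) = C at hpar ⊢
      generalize (p d : ZMod 2) = D at hpar ⊢
      generalize (p e : ZMod 2) = X at hpar ⊢
      revert hpar
      revert A B C D X
      decide
    calc (-1:ℂ)^(p a * p e) * ((-1:ℂ)^(p e * p c) * Rm u v e c b d)
        = (-1:ℂ)^(p a * p e + p e * p c) * Rm u v e c b d := by
          rw [pow_add]; ring
      _ = (-1:ℂ)^(p e * p b + p b + p e * p c + (p a * p b + (p c + p d) * (p b + p a)))
            * Rm u v e c b d := by rw [hsgn]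
      _ = _ := by rw [pow_add, pow_add]; ring

/-- push `Pim` to the right through an `Lmat` (site `j ≠ n`). -/
lemma Lmat_mul_Pim
    (hcomp : ∀ u v α β γ δ, ((p α + p β + p γ + p δ : ℕ) : ZMod 2) ≠ 0 →
      Rm u v α β γ δ = 0)
    {j n : Fin L} (h : j ≠ n) (u v : ℂ) :
    Lmat p Rm j u v * Pim p n
      = Matrix.of fun a b => Pim p n a b * Rop p Rm u v n j := by
  refine Matrix.ext fun a b => ?_
  rw [Matrix.mul_apply, Matrix.of_apply]
  have h1 : (∑ γ, Lmat p Rm j u v a γ * Pim p n γ b)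
      = ∑ f, ∑ c, ∑ d, ((((-1:ℂ)^(p a * p c) * Rm u v a c f d) * ((-1:ℂ)^(p f * p b)))
          * (-1:ℂ)^((p c + p d) * (p b + p f)))
          • (E p n b f * E p j c d) := by
    refine Finset.sum_congr rfl fun f _ => ?_
    rw [Pim, Lmat, Matrix.of_apply, Matrix.of_apply, Finset.sum_mul]
    refine Finset.sum_congr rfl fun c _ => ?_
    rw [Finset.sum_mul]
    refine Finset.sum_congr rfl fun d _ => ?_
    rw [smul_mul_smul', E_comm p h c d b f, smul_smul]
  have h2 : Pim p n a b * Rop p Rm u v n j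
      = ∑ f, ∑ c, ∑ d, (((-1:ℂ)^(p a * p b)) * ((-1:ℂ)^(p a * p f + p f + p a * p c)
          * Rm u v a c f d)) • (E p n b f * E p j c d) := by
    rw [Pim, Matrix.of_apply, Rop, Finset.mul_sum, Finset.sum_eq_single a]
    · rw [Finset.mul_sum]
      refine Finset.sum_congr rfl fun f _ => ?_
      rw [Finset.mul_sum]
      refine Finset.sum_congr rfl fun c _ => ?_
      rw [Finset.mul_sum]
      refine Finset.sum_congr rfl fun d _ => ?_
      rw [smul_mul_smul', E_E_EE p h b a a f c d, if_pos rfl]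
    · intro e _ he
      rw [Finset.mul_sum]
      refine Finset.sum_eq_zero fun f _ => ?_
      rw [Finset.mul_sum]
      refine Finset.sum_eq_zero fun c _ => ?_
      rw [Finset.mul_sum]
      refine Finset.sum_eq_zero fun d _ => ?_
      rw [smul_mul_smul', E_E_EE p h b a e f c d, if_neg (fun hh => he hh.symm),
        zero_mul, smul_zero]
    · intro hmem; exact absurd (Finset.mem_univ _) hmem
  rw [h1, h2]
  refine Finset.sum_congr rfl fun f _ => Finset.sum_congr rfl fun c _ =>
    Finset.sum_congr rfl fun d _ => ?_
  by_cases hR : Rm u v a c f d = 0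
  · rw [hR]; simp
  · have hpar : ((p a + p c + p f + p d : ℕ) : ZMod 2) = 0 := by
      by_contra hcon; exact hR (hcomp u v a c f d hcon)
    congr 1
    have hsgn : (-1:ℂ)^(p a * p c + p f * p b + (p c + p d) * (p b + p f))
        = (-1:ℂ)^(p a * p b + (p a * p f + p f + p a * p c)) := by
      apply neg_one_pow_congr'
      push_cast at hpar ⊢
      generalize (p a : ZMod 2) = A at hpar ⊢
      generalize (p b : ZMod 2) = B
      generalize (p c : ZMod 2) = C at hpar ⊢
      generalize (p d : ZMod 2) = D at hpar ⊢
      generalize (p f : ZMod 2) = X at hpar ⊢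
      revert hpar
      revert A B C D X
      decide
    calc (-1:ℂ)^(p a * p c) * Rm u v a c f d * (-1:ℂ)^(p f * p b)
          * (-1:ℂ)^((p c + p d) * (p b + p f))
        = (-1:ℂ)^(p a * p c + p f * p b + (p c + p d) * (p b + p f)) * Rm u v a c f d := by
          rw [pow_add, pow_add]; ring
      _ = (-1:ℂ)^(p a * p b + (p a * p f + p f + p a * p c)) * Rm u v a c f d := by rw [hsgn]
      _ = _ := by rw [pow_add]; ring

variable (ξ : Fin L → ℂ)

/-- `Lmat` as a function of a natural-number site index (junk value 1). -/
noncomputable def FN (u : ℂ) (j : ℕ) : Matrix (Fin N) (Fin N) (Matrix (Conf L N) (Conf L N) ℂ) :=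
  if h : j < L then Lmat p Rm ⟨j, h⟩ u (ξ ⟨j, h⟩) else 1

/-- `Rop` at inhomogeneities, ℕ-indexed (junk value 1). -/
noncomputable def RqN (a b : ℕ) : Matrix (Conf L N) (Conf L N) ℂ :=
  if h : a < L ∧ b < L then Rop p Rm (ξ ⟨a, h.1⟩) (ξ ⟨b, h.2⟩) ⟨a, h.1⟩ ⟨b, h.2⟩ else 1

/-- descending product of `RqN j k` for `k` from `L-1` down to `m`. -/
noncomputable def Qp (j m : ℕ) : Matrix (Conf L N) (Conf L N) ℂ :=
  ((List.range' m (L - m)).reverse.map (RqN p Rm ξ j)).prod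

/-- descending product of `RqN n j` for `j` from `n-1` down to `0`. -/
noncomputable def BopN (n : ℕ) : Matrix (Conf L N) (Conf L N) ℂ :=
  ((List.range n).reverse.map (RqN p Rm ξ n)).prod

noncomputable def strN (j : ℕ) : Matrix (Conf L N) (Conf L N) ℂ :=
  if h : j < L then str p (Tm p Rm ξ (ξ ⟨j, h⟩)) else 1

lemma commute_list_prod {l : List (Matrix (Conf L N) (Conf L N) ℂ)}
    {x : Matrix (Conf L N) (Conf L N) ℂ} (h : ∀ y ∈ l, x * y = y * x) :
    x * l.prod = l.prod * x := by
  induction l with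
  | nil => simp
  | cons y t ih =>
    rw [List.prod_cons, ← mul_assoc, h y (by simp), mul_assoc,
      ih (fun z hz => h z (by simp [hz])), ← mul_assoc]

lemma RqN_E_comm
    (hcomp : ∀ u v α β γ δ, ((p α + p β + p γ + p δ : ℕ) : ZMod 2) ≠ 0 →
      Rm u v α β γ δ = 0)
    (n : Fin L) (a b : ℕ) (ha : a ≠ n.1) (hb : b ≠ n.1) (e f : Fin N) :
    RqN p Rm ξ a b * E p n e f = E p n e f * RqN p Rm ξ a b := by
  rw [RqN]
  split_ifs with h
  · exact Rop_E_comm p Rm hcomp (Fin.ne_of_val_ne ha) (Fin.ne_of_val_ne hb) _ _ e f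
  · rw [one_mul, mul_one]

lemma Rop_Rop_comm
    (hcomp : ∀ u v α β γ δ, ((p α + p β + p γ + p δ : ℕ) : ZMod 2) ≠ 0 →
      Rm u v α β γ δ = 0)
    {j k j' k' : Fin L} (h1 : j' ≠ j) (h2 : j' ≠ k) (h3 : k' ≠ j)
    (h4 : k' ≠ k) (u v u' v' : ℂ) :
    Rop p Rm u v j k * Rop p Rm u' v' j' k' = Rop p Rm u' v' j' k' * Rop p Rm u v j k := by
  rw [show Rop p Rm u' v' j' k' = ∑ a, ∑ b, ∑ c, ∑ d,
    ((-1:ℂ)^(p a * p b + p b + p a * p c) * Rm u' v' a c b d) • (E p j' a b * E p k' c d)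
    from rfl, Finset.mul_sum, Finset.sum_mul]
  refine Finset.sum_congr rfl fun a _ => ?_
  rw [Finset.mul_sum, Finset.sum_mul]
  refine Finset.sum_congr rfl fun b _ => ?_
  rw [Finset.mul_sum, Finset.sum_mul]
  refine Finset.sum_congr rfl fun c _ => ?_
  rw [Finset.mul_sum, Finset.sum_mul]
  refine Finset.sum_congr rfl fun d _ => ?_
  rw [mul_smul_comm, smul_mul_assoc]
  congr 1
  rw [← mul_assoc, Rop_E_comm p Rm hcomp h1.symm h2.symm u v a b, mul_assoc,
    Rop_E_comm p Rm hcomp h3.symm h4.symm u v c d, ← mul_assoc]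

lemma RqN_RqN_comm
    (hcomp : ∀ u v α β γ δ, ((p α + p β + p γ + p δ : ℕ) : ZMod 2) ≠ 0 →
      Rm u v α β γ δ = 0)
    {a b c d : ℕ} (h1 : c ≠ a) (h2 : c ≠ b) (h3 : d ≠ a) (h4 : d ≠ b) :
    RqN p Rm ξ a b * RqN p Rm ξ c d = RqN p Rm ξ c d * RqN p Rm ξ a b := by
  rw [RqN, RqN]
  split_ifs with hab hcd hcd
  · exact Rop_Rop_comm p Rm hcomp (j := ⟨a, hab.1⟩) (k := ⟨b, hab.2⟩)
      (j' := ⟨c, hcd.1⟩) (k' := ⟨d, hcd.2⟩) (Fin.ne_of_val_ne h1)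
      (Fin.ne_of_val_ne h2) (Fin.ne_of_val_ne h3) (Fin.ne_of_val_ne h4) _ _ _ _
  · rw [one_mul, mul_one]
  · rw [one_mul, mul_one]
  · rfl

lemma RqN_unitary
    (huni : ∀ u v α β α' β',
      (∑ γ, ∑ δ, Rm u v α β γ δ * Rm v u δ γ α' β') =
        if α = β' ∧ β = α' then 1 else 0)
    (hcomp : ∀ u v α β γ δ, ((p α + p β + p γ + p δ : ℕ) : ZMod 2) ≠ 0 →
      Rm u v α β γ δ = 0)
    {a b : ℕ} (h : a ≠ b) :
    RqN p Rm ξ a b * RqN p Rm ξ b a = 1 := by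
  rw [RqN, RqN]
  split_ifs with hab hba hba
  · exact Rop_unitary p Rm huni hcomp (Fin.ne_of_val_ne h) _ _
  · exact absurd ⟨hab.2, hab.1⟩ hba
  · exact absurd ⟨hba.2, hba.1⟩ hab
  · rw [one_mul]

lemma Qp_ge {j m : ℕ} (h : L ≤ m) : Qp p Rm ξ j m = 1 := by
  rw [Qp, Nat.sub_eq_zero_of_le h]
  simp

lemma Qp_step {m : ℕ} (hm : m < L) (j : ℕ) :
    Qp p Rm ξ j m = Qp p Rm ξ j (m+1) * RqN p Rm ξ j m := by
  rw [Qp, Qp, show L - m = (L - (m+1)) + 1 by omega, List.range'_succ]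
  simp

lemma RqN_comm_Qp
    (hcomp : ∀ u v α β γ δ, ((p α + p β + p γ + p δ : ℕ) : ZMod 2) ≠ 0 →
      Rm u v α β γ δ = 0)
    {ν s j m : ℕ} (h1 : j ≠ ν) (h2 : j ≠ s) (hν : ν < m) (hs : s < m) :
    RqN p Rm ξ ν s * Qp p Rm ξ j m = Qp p Rm ξ j m * RqN p Rm ξ ν s := by
  rw [Qp]
  refine commute_list_prod fun y hy => ?_
  simp only [List.mem_map, List.mem_reverse, List.mem_range'_1] at hy
  obtain ⟨k, ⟨hk1, hk2⟩, rfl⟩ := hy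
  exact RqN_RqN_comm p Rm ξ hcomp (a := ν) (b := s) (c := j) (d := k)
    h1 h2 (by omega) (by omega)

lemma E_comm_Qp
    (hcomp : ∀ u v α β γ δ, ((p α + p β + p γ + p δ : ℕ) : ZMod 2) ≠ 0 →
      Rm u v α β γ δ = 0)
    (n : Fin L) {j m : ℕ} (h1 : j ≠ n.1) (hm : n.1 < m) (e f : Fin N) :
    E p n e f * Qp p Rm ξ j m = Qp p Rm ξ j m * E p n e f := by
  rw [Qp]
  refine commute_list_prod fun y hy => ?_
  simp only [List.mem_map, List.mem_reverse, List.mem_range'_1] at hy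
  obtain ⟨k, ⟨hk1, hk2⟩, rfl⟩ := hy
  exact (RqN_E_comm p Rm ξ hcomp n j k h1 (by omega) e f).symm

/-- telescoping cancellation -/
lemma tele
    (huni : ∀ u v α β α' β',
      (∑ γ, ∑ δ, Rm u v α β γ δ * Rm v u δ γ α' β') =
        if α = β' ∧ β = α' then 1 else 0)
    (hcomp : ∀ u v α β γ δ, ((p α + p β + p γ + p δ : ℕ) : ZMod 2) ≠ 0 →
      Rm u v α β γ δ = 0)
    {ν : ℕ} (hν : ν < L) : ∀ t s, s + t = ν →
    ((List.range' s t).map (fun j => Qp p Rm ξ j ν)).prod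
      * ((List.range' s t).reverse.map (RqN p Rm ξ ν)).prod
    = ((List.range' s t).map (fun j => Qp p Rm ξ j (ν+1))).prod := by
  intro t
  induction t with
  | zero => intro s hs; simp
  | succ t ih =>
    intro s hs
    rw [List.range'_succ]
    simp only [List.map_cons, List.prod_cons, List.reverse_cons, List.map_append,
      List.prod_append, List.map_nil, List.prod_nil, mul_one]
    have hcm : RqN p Rm ξ ν s
        * ((List.range' (s+1) t).map (fun j => Qp p Rm ξ j (ν+1))).prod
        = ((List.range' (s+1) t).map (fun j => Qp p Rm ξ j (ν+1))).prod
          * RqN p Rm ξ ν s := by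
      refine commute_list_prod fun y hy => ?_
      simp only [List.mem_map, List.mem_range'_1] at hy
      obtain ⟨j, ⟨hj1, hj2⟩, rfl⟩ := hy
      exact RqN_comm_Qp p Rm ξ hcomp (by omega) (by omega) (by omega) (by omega)
    calc Qp p Rm ξ s ν
          * ((List.range' (s+1) t).map (fun j => Qp p Rm ξ j ν)).prod
          * (((List.range' (s+1) t).reverse.map (RqN p Rm ξ ν)).prod
            * RqN p Rm ξ ν s)
        = Qp p Rm ξ s ν
          * (((List.range' (s+1) t).map (fun j => Qp p Rm ξ j ν)).prod
          * ((List.range' (s+1) t).reverse.map (RqN p Rm ξ ν)).prod)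
            * RqN p Rm ξ ν s := by
          rw [mul_assoc, mul_assoc, mul_assoc]
      _ = Qp p Rm ξ s ν
          * ((List.range' (s+1) t).map (fun j => Qp p Rm ξ j (ν+1))).prod
            * RqN p Rm ξ ν s := by rw [ih (s+1) (by omega)]
      _ = Qp p Rm ξ s ν * RqN p Rm ξ ν s
            * ((List.range' (s+1) t).map (fun j => Qp p Rm ξ j (ν+1))).prod := by
          rw [mul_assoc, ← hcm, ← mul_assoc]
      _ = Qp p Rm ξ s (ν+1) * (RqN p Rm ξ s ν * RqN p Rm ξ ν s)
            * ((List.range' (s+1) t).map (fun j => Qp p Rm ξ j (ν+1))).prod := by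
          rw [Qp_step p Rm ξ hν s, mul_assoc (Qp p Rm ξ s (ν+1))]
      _ = Qp p Rm ξ s (ν+1)
            * ((List.range' (s+1) t).map (fun j => Qp p Rm ξ j (ν+1))).prod := by
          rw [RqN_unitary p Rm ξ huni hcomp (by omega), mul_one]

/-- matrices of operators: pull a left scalar out of a product -/
lemma leftMul_mul (X : Matrix (Conf L N) (Conf L N) ℂ)
    (M M' : Matrix (Fin N) (Fin N) (Matrix (Conf L N) (Conf L N) ℂ)) :
    (Matrix.of fun a b => X * M a b) * M' = Matrix.of fun a b => X * (M * M') a b := by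
  refine Matrix.ext fun a b => ?_
  rw [Matrix.mul_apply, Matrix.of_apply, Matrix.mul_apply, Finset.mul_sum]
  exact Finset.sum_congr rfl fun g _ => by rw [Matrix.of_apply, mul_assoc]

lemma mul_rightMul (X : Matrix (Conf L N) (Conf L N) ℂ)
    (M M' : Matrix (Fin N) (Fin N) (Matrix (Conf L N) (Conf L N) ℂ)) :
    M' * (Matrix.of fun a b => M a b * X) = Matrix.of fun a b => (M' * M) a b * X := by
  refine Matrix.ext fun a b => ?_
  rw [Matrix.mul_apply, Matrix.of_apply, Matrix.mul_apply, Finset.sum_mul]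
  exact Finset.sum_congr rfl fun g _ => by rw [Matrix.of_apply, mul_assoc]

lemma mul_leftMul_of_comm (X : Matrix (Conf L N) (Conf L N) ℂ)
    (M M' : Matrix (Fin N) (Fin N) (Matrix (Conf L N) (Conf L N) ℂ))
    (h : ∀ a b, M' a b * X = X * M' a b) :
    M' * (Matrix.of fun a b => X * M a b) = Matrix.of fun a b => X * (M' * M) a b := by
  refine Matrix.ext fun a b => ?_
  rw [Matrix.mul_apply, Matrix.of_apply, Matrix.mul_apply, Finset.mul_sum]
  refine Finset.sum_congr rfl fun g _ => ?_
  rw [Matrix.of_apply, ← mul_assoc, h a g, mul_assoc]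

/-- entries of a product of operator-matrices commute with `X` if all entries do -/
lemma entries_comm_prod (X : Matrix (Conf L N) (Conf L N) ℂ)
    (l : List (Matrix (Fin N) (Fin N) (Matrix (Conf L N) (Conf L N) ℂ)))
    (h : ∀ M ∈ l, ∀ a b, X * M a b = M a b * X) :
    ∀ a b, X * l.prod a b = l.prod a b * X := by
  induction l with
  | nil =>
    intro a b
    rw [List.prod_nil, Matrix.one_apply]
    split_ifs
    · rw [one_mul, mul_one]
    · rw [mul_zero, zero_mul]
  | cons M t ih =>
    intro a b
    rw [List.prod_cons, Matrix.mul_apply, Finset.mul_sum, Finset.sum_mul]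
    refine Finset.sum_congr rfl fun g _ => ?_
    rw [← mul_assoc, h M (by simp) a g, mul_assoc, ih (fun M' hM' => h M' (by simp [hM'])) g b,
      ← mul_assoc]

lemma Tm_eq (u : ℂ) :
    Tm p Rm ξ u = ((List.range L).reverse.map (FN p Rm ξ u)).prod := by
  rw [Tm]
  congr 1
  rw [← List.map_reverse, ← List_map_coe_finRange, ← List.map_reverse, List.map_map]
  refine List.map_congr_left fun j _ => ?_
  show Lmat p Rm j u (ξ j) = FN p Rm ξ u j.1
  rw [FN, dif_pos j.2]

lemma Tm_split (n : Fin L) (u : ℂ) :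
    Tm p Rm ξ u
      = ((List.range' (n.1+1) (L-(n.1+1))).reverse.map (FN p Rm ξ u)).prod
        * FN p Rm ξ u n.1
        * ((List.range n.1).reverse.map (FN p Rm ξ u)).prod := by
  have hsplit : List.range' 0 L
      = List.range' 0 n.1 ++ (n.1 :: List.range' (n.1+1) (L - (n.1+1))) := by
    have h := List.range'_append_1 (s := 0) (m := n.1) (n := L - n.1)
    rw [Nat.zero_add, show n.1 + (L - n.1) = L from by have := n.2; omega] at h
    rw [← h, show L - n.1 = (L - (n.1+1)) + 1 from by have := n.2; omega,
      List.range'_succ]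
  rw [Tm_eq, List.range_eq_range', hsplit]
  simp only [List.reverse_append, List.reverse_cons, List.map_append, List.prod_append,
    List.map_cons, List.prod_cons, List.map_nil, List.prod_nil, mul_one,
    List.range_eq_range']

lemma FN_at (n : Fin L) (u : ℂ) : FN p Rm ξ u n.1 = Lmat p Rm n u (ξ n) := by
  rw [FN, dif_pos n.2]

lemma RqN_eq (n j : Fin L) :
    RqN p Rm ξ n.1 j.1 = Rop p Rm (ξ n) (ξ j) n j := by
  rw [RqN, dif_pos ⟨n.2, j.2⟩]

/-- push `Pim` through the `B`-part -/
lemma Pim_push_B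
    (hcomp : ∀ u v α β γ δ, ((p α + p β + p γ + p δ : ℕ) : ZMod 2) ≠ 0 →
      Rm u v α β γ δ = 0)
    (n : Fin L) : ∀ m, m ≤ n.1 →
    Pim p n * ((List.range m).reverse.map (FN p Rm ξ (ξ n))).prod
      = Matrix.of fun a b =>
          ((List.range m).reverse.map (RqN p Rm ξ n.1)).prod * Pim p n a b := by
  intro m
  induction m with
  | zero =>
    intro _
    simp only [List.range_zero, List.reverse_nil, List.map_nil, List.prod_nil, mul_one, one_mul]
    rfl
  | succ m ih =>
    intro hm
    have hmL : m < L := by have := n.2; omega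
    rw [List.range_succ]
    simp only [List.reverse_append, List.reverse_cons, List.reverse_nil, List.nil_append,
      List.map_cons, List.prod_cons, List.map_append, List.prod_append, List.map_nil,
      List.prod_nil, mul_one]
    have hFN : FN p Rm ξ (ξ n) m = Lmat p Rm ⟨m, hmL⟩ (ξ n) (ξ ⟨m, hmL⟩) := by
      rw [FN, dif_pos hmL]
    have hmn : m ≠ n.1 := by omega
    have hne : (⟨m, hmL⟩ : Fin L) ≠ n := Fin.ne_of_val_ne hmn
    rw [← mul_assoc, hFN, Pim_mul_Lmat p Rm hcomp hne (ξ n) (ξ ⟨m, hmL⟩),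
      leftMul_mul, ih (by omega)]
    refine Matrix.ext fun a b => ?_
    rw [Matrix.of_apply, Matrix.of_apply, Matrix.of_apply, ← mul_assoc, RqN,
      dif_pos ⟨n.2, hmL⟩]

/-- push `Pim` through the `A`-part -/
lemma Pim_push_A
    (hcomp : ∀ u v α β γ δ, ((p α + p β + p γ + p δ : ℕ) : ZMod 2) ≠ 0 →
      Rm u v α β γ δ = 0)
    (n : Fin L) : ∀ k, n.1 + 1 + k ≤ L →
    ((List.range' (n.1+1) k).reverse.map (FN p Rm ξ (ξ n))).prod * Pim p n
      = Matrix.of fun a b =>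
          Pim p n a b * ((List.range' (n.1+1) k).reverse.map (RqN p Rm ξ n.1)).prod := by
  intro k
  induction k with
  | zero =>
    intro _
    simp only [List.range'_zero, List.reverse_nil, List.map_nil, List.prod_nil, one_mul, mul_one]
    rfl
  | succ k ih =>
    intro hk
    have hkL : n.1 + 1 + k < L := by omega
    rw [List.range'_1_concat]
    simp only [List.reverse_append, List.reverse_cons, List.reverse_nil, List.nil_append,
      List.map_cons, List.prod_cons, List.map_append, List.prod_append, List.map_nil,
      List.prod_nil, mul_one]
    have hFN : FN p Rm ξ (ξ n) (n.1+1+k) = Lmat p Rm ⟨n.1+1+k, hkL⟩ (ξ n) (ξ ⟨n.1+1+k, hkL⟩) := by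
      rw [FN, dif_pos hkL]
    have hkn : n.1+1+k ≠ n.1 := by omega
    have hne : (⟨n.1+1+k, hkL⟩ : Fin L) ≠ n := Fin.ne_of_val_ne hkn
    rw [mul_assoc, ih (by omega), hFN,
      mul_rightMul, Lmat_mul_Pim p Rm hcomp hne (ξ n) (ξ ⟨n.1+1+k, hkL⟩)]
    refine Matrix.ext fun a b => ?_
    rw [Matrix.of_apply, Matrix.of_apply, Matrix.of_apply, mul_assoc, RqN,
      dif_pos ⟨n.2, hkL⟩]

lemma BopN_E_comm
    (hcomp : ∀ u v α β γ δ, ((p α + p β + p γ + p δ : ℕ) : ZMod 2) ≠ 0 →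
      Rm u v α β γ δ = 0)
    (n k : Fin L) (hk : n.1 < k.1) (e f : Fin N) :
    BopN p Rm ξ n.1 * E p k e f = E p k e f * BopN p Rm ξ n.1 := by
  rw [BopN]
  refine (commute_list_prod fun y hy => ?_).symm
  simp only [List.mem_map, List.mem_reverse, List.mem_range] at hy
  obtain ⟨j, hj, rfl⟩ := hy
  exact (RqN_E_comm p Rm ξ hcomp k n.1 j (by omega) (by omega) e f).symm

lemma BopN_comm_Lent
    (hcomp : ∀ u v α β γ δ, ((p α + p β + p γ + p δ : ℕ) : ZMod 2) ≠ 0 →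
      Rm u v α β γ δ = 0)
    (n k : Fin L) (hk : n.1 < k.1) (u v : ℂ) (a b : Fin N) :
    BopN p Rm ξ n.1 * Lmat p Rm k u v a b = Lmat p Rm k u v a b * BopN p Rm ξ n.1 := by
  rw [Lmat, Matrix.of_apply, Finset.mul_sum, Finset.sum_mul]
  refine Finset.sum_congr rfl fun c _ => ?_
  rw [Finset.mul_sum, Finset.sum_mul]
  refine Finset.sum_congr rfl fun d _ => ?_
  rw [mul_smul_comm, smul_mul_assoc]
  congr 1
  exact BopN_E_comm p Rm ξ hcomp n k hk c d

lemma Tm_entry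
    (hreg : ∀ v α β γ δ, Rm v v α β γ δ = if α = δ ∧ β = γ then 1 else 0)
    (hcomp : ∀ u v α β γ δ, ((p α + p β + p γ + p δ : ℕ) : ZMod 2) ≠ 0 →
      Rm u v α β γ δ = 0)
    (n : Fin L) (a b : Fin N) :
    Tm p Rm ξ (ξ n) a b = ((-1:ℂ)^(p a * p b))
      • (BopN p Rm ξ n.1 * (E p n b a * Qp p Rm ξ n.1 (n.1+1))) := by
  have hA := Pim_push_A p Rm ξ hcomp n (L - (n.1+1)) (by have := n.2; omega)
  have hB := Pim_push_B p Rm ξ hcomp n n.1 le_rfl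
  have hcm : ∀ a b, ((List.range' (n.1+1) (L-(n.1+1))).reverse.map (FN p Rm ξ (ξ n))).prod a b
      * ((List.range n.1).reverse.map (RqN p Rm ξ n.1)).prod
      = ((List.range n.1).reverse.map (RqN p Rm ξ n.1)).prod
        * ((List.range' (n.1+1) (L-(n.1+1))).reverse.map (FN p Rm ξ (ξ n))).prod a b := by
    intro a b
    refine (entries_comm_prod _ _ (fun M hM a b => ?_) a b).symm
    simp only [List.mem_map, List.mem_reverse, List.mem_range'_1] at hM
    obtain ⟨k, ⟨hk1, hk2⟩, rfl⟩ := hM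
    have hkL : k < L := by omega
    rw [show FN p Rm ξ (ξ n) k = Lmat p Rm ⟨k, hkL⟩ (ξ n) (ξ ⟨k, hkL⟩) from by
      rw [FN, dif_pos hkL]]
    exact BopN_comm_Lent p Rm ξ hcomp n ⟨k, hkL⟩ (show n.1 < k by omega) _ _ a b
  rw [Tm_split p Rm ξ n (ξ n), FN_at, Lmat_reg p Rm hreg n (ξ n), mul_assoc, hB,
    mul_leftMul_of_comm _ _ _ hcm, hA, Matrix.of_apply, Matrix.of_apply, Pim,
    Matrix.of_apply, smul_mul_assoc, mul_smul_comm]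
  rfl

lemma strN_eq
    (hreg : ∀ v α β γ δ, Rm v v α β γ δ = if α = δ ∧ β = γ then 1 else 0)
    (hcomp : ∀ u v α β γ δ, ((p α + p β + p γ + p δ : ℕ) : ZMod 2) ≠ 0 →
      Rm u v α β γ δ = 0)
    (m : ℕ) (hm : m < L) :
    strN p Rm ξ m = BopN p Rm ξ m * Qp p Rm ξ m (m+1) := by
  rw [strN, dif_pos hm]
  set n : Fin L := ⟨m, hm⟩ with hn
  show str p (Tm p Rm ξ (ξ n)) = BopN p Rm ξ n.1 * Qp p Rm ξ n.1 (n.1+1)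
  rw [str]
  calc (∑ a, ((-1:ℂ)^(p a)) • Tm p Rm ξ (ξ n) a a)
      = ∑ a, BopN p Rm ξ n.1 * (E p n a a * Qp p Rm ξ n.1 (n.1+1)) := by
        refine Finset.sum_congr rfl fun a _ => ?_
        rw [Tm_entry p Rm ξ hreg hcomp n a a, smul_smul, ← pow_add,
          show (-1:ℂ)^(p a + p a * p a) = (-1:ℂ)^(0:ℕ) from neg_one_pow_congr' (by
            push_cast
            generalize (p a : ZMod 2) = A
            revert A
            decide), pow_zero, one_smul]
    _ = BopN p Rm ξ n.1 * ((∑ a, E p n a a) * Qp p Rm ξ n.1 (n.1+1)) := by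
        rw [← Finset.mul_sum, ← Finset.sum_mul]
    _ = _ := by rw [E_sum_diag, one_mul]

lemma strQ_prod
    (hreg : ∀ v α β γ δ, Rm v v α β γ δ = if α = δ ∧ β = γ then 1 else 0)
    (huni : ∀ u v α β α' β',
      (∑ γ, ∑ δ, Rm u v α β γ δ * Rm v u δ γ α' β') =
        if α = β' ∧ β = α' then 1 else 0)
    (hcomp : ∀ u v α β γ δ, ((p α + p β + p γ + p δ : ℕ) : ZMod 2) ≠ 0 →
      Rm u v α β γ δ = 0) :
    ∀ m, m ≤ L →
    ((List.range m).map (strN p Rm ξ)).prod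
      = ((List.range m).map (fun j => Qp p Rm ξ j m)).prod := by
  intro m
  induction m with
  | zero => intro _; rfl
  | succ m ih =>
    intro hm
    have hmL : m < L := by omega
    rw [List.range_succ]
    simp only [List.map_append, List.prod_append, List.map_cons, List.prod_cons,
      List.map_nil, List.prod_nil, mul_one]
    rw [ih (by omega), strN_eq p Rm ξ hreg hcomp m hmL, ← mul_assoc]
    have ht := tele p Rm ξ huni hcomp (ν := m) hmL m 0 (by omega)
    rw [← List.range_eq_range'] at ht
    rw [BopN, ht]

end QIP

/-- Solution of the quantum inverse problem for fundamental graded models: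
for a regular, unitary `R`-matrix satisfying the Yang-Baxter equation and
compatible with the grading,
`e_n{}_α^β = (-1)^{p(α)p(β)} (∏_{j<n} str(T(ξ_j))) · T^β_α(ξ_n) ·
(∏_{j>n} str(T(ξ_j)))`, where `T(u) = L_L(u,ξ_L) ⋯ L_1(u,ξ_1)` is the
inhomogeneous monodromy matrix. Sites are 0-indexed here. -/
theorem quantum_inverse_problem {L N : ℕ} (p : Fin N → ℕ)
    (Rm : ℂ → ℂ → Fin N → Fin N → Fin N → Fin N → ℂ) (ξ : Fin L → ℂ)
    (hreg : ∀ v α β γ δ, Rm v v α β γ δ = if α = δ ∧ β = γ then 1 else 0)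
    (huni : ∀ u v α β α' β',
      (∑ γ, ∑ δ, Rm u v α β γ δ * Rm v u δ γ α' β') =
        if α = β' ∧ β = α' then 1 else 0)
    (hcomp : ∀ u v α β γ δ, ((p α + p β + p γ + p δ : ℕ) : ZMod 2) ≠ 0 →
      Rm u v α β γ δ = 0)
    (hybe : ∀ u v w, ∀ α β γ α'' β'' γ'',
      (∑ α', ∑ β', ∑ γ',
        Rm u v α β α' β' * Rm u w α' γ α'' γ' * Rm v w β' γ' β'' γ'') =
      (∑ α', ∑ β', ∑ γ',
        Rm v w β γ β' γ' * Rm u w α γ' α' γ'' * Rm u v α' β' α'' β''))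
    (n : Fin L) (α β : Fin N) :
    E p n α β = ((-1 : ℂ) ^ (p α * p β)) •
      ((List.ofFn (fun i : Fin n.1 =>
          str p (Tm p Rm ξ (ξ ⟨i.1, by have := i.2; have := n.2; omega⟩)))).prod *
        Tm p Rm ξ (ξ n) β α *
        (List.ofFn (fun i : Fin (L - 1 - n.1) =>
          str p (Tm p Rm ξ (ξ ⟨n.1 + 1 + i.1, by have := i.2; omega⟩)))).prod) := by
  classical
  have hnL : n.1 < L := n.2
  have hG : (List.ofFn (fun i : Fin n.1 =>
        str p (Tm p Rm ξ (ξ ⟨i.1, by have := i.2; have := n.2; omega⟩)))).prod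
      = ((List.range n.1).map (QIP.strN p Rm ξ)).prod := by
    congr 1
    rw [List.ofFn_eq_map, ← List_map_coe_finRange, List.map_map]
    refine List.map_congr_left fun i _ => ?_
    show str p (Tm p Rm ξ _) = QIP.strN p Rm ξ i.1
    rw [QIP.strN, dif_pos (show i.1 < L by have := i.2; omega)]
  have hH : (List.ofFn (fun i : Fin (L - 1 - n.1) =>
        str p (Tm p Rm ξ (ξ ⟨n.1 + 1 + i.1, by have := i.2; omega⟩)))).prod
      = ((List.range' (n.1+1) (L-1-n.1)).map (QIP.strN p Rm ξ)).prod := by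
    congr 1
    rw [List.ofFn_eq_map, List.range'_eq_map_range, List.map_map,
      ← List_map_coe_finRange, List.map_map]
    refine List.map_congr_left fun i _ => ?_
    show str p (Tm p Rm ξ _) = QIP.strN p Rm ξ (n.1 + 1 + i.1)
    rw [QIP.strN, dif_pos (show n.1 + 1 + i.1 < L by have := i.2; omega)]
  rw [hG, hH, QIP.Tm_entry p Rm ξ hreg hcomp n β α, mul_smul_comm, smul_mul_assoc,
    smul_smul, ← pow_add,
    show (-1:ℂ)^(p α * p β + p β * p α) = 1 from by
      rw [show p α * p β + p β * p α = 2 * (p α * p β) from by ring, pow_mul]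
      norm_num,
    one_smul]
  have hW : ((List.range n.1).map (QIP.strN p Rm ξ)).prod * QIP.BopN p Rm ξ n.1
      = ((List.range n.1).map (fun j => QIP.Qp p Rm ξ j (n.1+1))).prod := by
    rw [QIP.strQ_prod p Rm ξ hreg huni hcomp n.1 hnL.le]
    have ht := QIP.tele p Rm ξ huni hcomp hnL n.1 0 (by omega)
    rw [← List.range_eq_range'] at ht
    rw [QIP.BopN, ht]
  have hWE : ((List.range n.1).map (fun j => QIP.Qp p Rm ξ j (n.1+1))).prod * E p n α β
      = E p n α β * ((List.range n.1).map (fun j => QIP.Qp p Rm ξ j (n.1+1))).prod := by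
    refine (QIP.commute_list_prod fun y hy => ?_).symm
    simp only [List.mem_map, List.mem_range] at hy
    obtain ⟨j, hj, rfl⟩ := hy
    exact QIP.E_comm_Qp p Rm ξ hcomp n (by omega) (by omega) α β
  have hWQ : ((List.range n.1).map (fun j => QIP.Qp p Rm ξ j (n.1+1))).prod
        * QIP.Qp p Rm ξ n.1 (n.1+1)
      = ((List.range (n.1+1)).map (QIP.strN p Rm ξ)).prod := by
    rw [QIP.strQ_prod p Rm ξ hreg huni hcomp (n.1+1) (by omega), List.range_succ]
    simp [List.map_append, List.prod_append]
  have hXH : ((List.range (n.1+1)).map (QIP.strN p Rm ξ)).prod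
        * ((List.range' (n.1+1) (L-1-n.1)).map (QIP.strN p Rm ξ)).prod = 1 := by
    rw [← List.prod_append, ← List.map_append]
    have hcat : List.range (n.1+1) ++ List.range' (n.1+1) (L-1-n.1) = List.range L := by
      have h2 := List.range'_append_1 (s := 0) (m := n.1+1) (n := L-1-n.1)
      rw [Nat.zero_add, show n.1+1 + (L-1-n.1) = L from by omega] at h2
      rw [List.range_eq_range', List.range_eq_range']
      exact h2
    rw [hcat, QIP.strQ_prod p Rm ξ hreg huni hcomp L le_rfl]
    refine List.prod_eq_one fun x hx => ?_
    simp only [List.mem_map, List.mem_range] at hx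
    obtain ⟨j, hj, rfl⟩ := hx
    exact QIP.Qp_ge p Rm ξ le_rfl
  rw [← mul_assoc (((List.range n.1).map (QIP.strN p Rm ξ)).prod), hW, ← mul_assoc, hWE,
    mul_assoc (E p n α β), hWQ, mul_assoc, hXH, mul_one]
end
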